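/- arXiv:2410.08430 — 4 statements merged into one kernel-verified Lean document; each statement's English description precedes it below -/
import Mathlib

section
/- For y_N ≥ 0 and t > 0, ∫_0^t (π(t-τ))^{-1/2} [ 1 + (y_N + τ)/(2(t-τ)) ] e^{-(y_N+τ)²/(4(t-τ))} dτ = (2/√π) ∫_{y_N/(2√t)}^∞ e^{-ξ²} dξ. -/
open Real MeasureTheory Set Filter

noncomputable def Ttail (x : ℝ) : ℝ := ∫ ξ in Set.Ioi x, Real.exp (-ξ ^ 2)

lemma exp_sq_integrable : Integrable (fun ξ : ℝ => Real.exp (-ξ ^ 2)) := by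
  have := integrable_exp_neg_mul_sq (b := 1) one_pos
  simpa using this

lemma Ttail_eq (x : ℝ) : Ttail x = Ttail 0 - ∫ u in (0:ℝ)..x, Real.exp (-u ^ 2) := by
  rcases le_or_gt 0 x with hx | hx
  · rw [intervalIntegral.integral_of_le hx]
    have h : Set.Ioi (0:ℝ) = Set.Ioc 0 x ∪ Set.Ioi x := (Set.Ioc_union_Ioi_eq_Ioi hx).symm
    have := setIntegral_union (f := fun ξ : ℝ => Real.exp (-ξ ^ 2)) (μ := volume)
      (s := Set.Ioc 0 x) (t := Set.Ioi x) Set.Ioc_disjoint_Ioi_same measurableSet_Ioi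
      exp_sq_integrable.integrableOn exp_sq_integrable.integrableOn
    unfold Ttail
    rw [h, this]; ring
  · rw [intervalIntegral.integral_of_ge hx.le]
    have h : Set.Ioi x = Set.Ioc x 0 ∪ Set.Ioi 0 := (Set.Ioc_union_Ioi_eq_Ioi hx.le).symm
    have := setIntegral_union (f := fun ξ : ℝ => Real.exp (-ξ ^ 2)) (μ := volume)
      (s := Set.Ioc x 0) (t := Set.Ioi 0) Set.Ioc_disjoint_Ioi_same measurableSet_Ioi
      exp_sq_integrable.integrableOn exp_sq_integrable.integrableOn
    unfold Ttail
    rw [h, this]; ring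

lemma Ttail_hasDerivAt (x : ℝ) : HasDerivAt Ttail (-(Real.exp (-x ^ 2))) x := by
  have hprim : HasDerivAt (fun u => ∫ s in (0:ℝ)..u, Real.exp (-s ^ 2)) (Real.exp (-x ^ 2)) x :=
    intervalIntegral.integral_hasDerivAt_right
      (exp_sq_integrable.intervalIntegrable)
      ((Real.continuous_exp.comp (by continuity)).stronglyMeasurableAtFilter _ _)
      (Real.continuous_exp.comp (by continuity)).continuousAt
  have h : HasDerivAt (fun u => Ttail 0 - ∫ s in (0:ℝ)..u, Real.exp (-s ^ 2))
      (-(Real.exp (-x ^ 2))) x := (hprim.const_sub _)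
  exact h.congr_of_eventuallyEq (Filter.Eventually.of_forall fun u => Ttail_eq u)

lemma Ttail_tendsto : Tendsto Ttail atTop (nhds 0) := by
  have h := MeasureTheory.intervalIntegral_tendsto_integral_Ioi (μ := volume) 0
    exp_sq_integrable.integrableOn (tendsto_id (α := ℝ) (x := atTop))
  have : Tendsto (fun x : ℝ => Ttail 0 - ∫ u in (0:ℝ)..x, Real.exp (-u ^ 2)) atTop
      (nhds (Ttail 0 - Ttail 0)) := (tendsto_const_nhds).sub h
  rw [sub_self] at this
  exact this.congr fun x => (Ttail_eq x).symm

/-- Mass of the correction kernel `H`. -/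
theorem stmt_3 (y t : ℝ) (hy : 0 ≤ y) (ht : 0 < t) :
    (∫ τ in (0 : ℝ)..t,
        (π * (t - τ)) ^ (-(1 : ℝ) / 2) * (1 + (y + τ) / (2 * (t - τ))) *
          Real.exp (-(y + τ) ^ 2 / (4 * (t - τ))))
      = 2 / Real.sqrt π * ∫ ξ in Set.Ioi (y / (2 * Real.sqrt t)), Real.exp (-ξ ^ 2) := by
  have hπ : (0:ℝ) < π := Real.pi_pos
  have hsπ : (0:ℝ) < Real.sqrt π := Real.sqrt_pos.2 hπ
  set f : ℝ → ℝ := fun τ =>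
    (π * (t - τ)) ^ (-(1 : ℝ) / 2) * (1 + (y + τ) / (2 * (t - τ))) *
      Real.exp (-(y + τ) ^ 2 / (4 * (t - τ))) with hfdef
  set g : ℝ → ℝ := fun τ => (y + τ) / (2 * Real.sqrt (t - τ)) with hgdef
  set A : ℝ → ℝ := fun τ => if τ < t then -(2 / Real.sqrt π * Ttail (g τ)) else 0 with hAdef
  -- derivative of A on Ioo 0 t
  have hderiv : ∀ τ ∈ Set.Ioo (0:ℝ) t, HasDerivAt A (f τ) τ := by
    intro τ hτ
    have hs : (0:ℝ) < t - τ := sub_pos.2 hτ.2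
    have hss : (0:ℝ) < Real.sqrt (t - τ) := Real.sqrt_pos.2 hs
    have hq : (0:ℝ) ≤ y + τ := by linarith [hτ.1]
    have hsqrt : HasDerivAt (fun τ' : ℝ => Real.sqrt (t - τ'))
        ((-1) / (2 * Real.sqrt (t - τ))) τ := by
      have h1 : HasDerivAt (fun τ' : ℝ => t - τ') (-1) τ := by
        simpa using (hasDerivAt_id τ).const_sub t
      exact h1.sqrt (ne_of_gt hs)
    have hden : HasDerivAt (fun τ' : ℝ => 2 * Real.sqrt (t - τ'))
        (2 * ((-1) / (2 * Real.sqrt (t - τ)))) τ := hsqrt.const_mul 2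
    have hnum : HasDerivAt (fun τ' : ℝ => y + τ') 1 τ := by
      simpa using (hasDerivAt_id τ).const_add y
    have hg' : HasDerivAt g
        ((1 * (2 * Real.sqrt (t - τ)) - (y + τ) * (2 * ((-1) / (2 * Real.sqrt (t - τ))))) /
          (2 * Real.sqrt (t - τ)) ^ 2) τ :=
      hnum.div hden (by positivity)
    have hB : HasDerivAt (fun τ' => -(2 / Real.sqrt π * Ttail (g τ')))
        (-(2 / Real.sqrt π * (-(Real.exp (-(g τ) ^ 2)) *
          ((1 * (2 * Real.sqrt (t - τ)) - (y + τ) * (2 * ((-1) / (2 * Real.sqrt (t - τ))))) /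
            (2 * Real.sqrt (t - τ)) ^ 2)))) τ :=
      (((Ttail_hasDerivAt (g τ)).comp τ hg').const_mul _).neg
    have hAB : A =ᶠ[nhds τ] fun τ' => -(2 / Real.sqrt π * Ttail (g τ')) := by
      filter_upwards [IsOpen.mem_nhds isOpen_Iio hτ.2] with τ' hτ'
      simp [hAdef, show τ' < t from hτ']
    have hDA := hAB.hasDerivAt_iff.2 hB
    refine hDA.congr_deriv (Eq.symm ?_)
    -- algebraic identity
    have h1 : g τ ^ 2 = (y + τ) ^ 2 / (4 * (t - τ)) := by
      rw [hgdef]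
      rw [div_pow, mul_pow, Real.sq_sqrt hs.le]
      norm_num
    have h2 : (π * (t - τ)) ^ (-(1 : ℝ) / 2) = (Real.sqrt π * Real.sqrt (t - τ))⁻¹ := by
      rw [neg_div, Real.rpow_neg (by positivity), ← Real.sqrt_eq_rpow,
        Real.sqrt_mul hπ.le]
    obtain ⟨u, hu⟩ : ∃ u, Real.sqrt (t - τ) = u := ⟨_, rfl⟩
    have hu0 : (0:ℝ) < u := hu ▸ hss
    have hsu : t - τ = u ^ 2 := by rw [← hu]; exact (Real.sq_sqrt hs.le).symm
    obtain ⟨p, hp⟩ : ∃ p, Real.sqrt π = p := ⟨_, rfl⟩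
    have hp0 : (0:ℝ) < p := hp ▸ hsπ
    rw [hfdef]
    simp only [h2, h1]
    simp only [hu, hp, neg_div]
    rw [hsu]
    field_simp
    ring
  -- continuity of A on Icc 0 t
  have hcont : ContinuousOn A (Set.Icc 0 t) := by
    intro τ hτ
    rcases lt_or_eq_of_le hτ.2 with hlt | heq
    · have hs : (0:ℝ) < t - τ := sub_pos.2 hlt
      have hAB : A =ᶠ[nhds τ] fun τ' => -(2 / Real.sqrt π * Ttail (g τ')) := by
        filter_upwards [IsOpen.mem_nhds isOpen_Iio hlt] with τ' hτ'
        simp [hAdef, show τ' < t from hτ']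
      have hgc : ContinuousAt g τ := by
        apply ContinuousAt.div
        · fun_prop
        · exact (continuous_const.mul
            (Real.continuous_sqrt.comp (continuous_const.sub continuous_id))).continuousAt
        · positivity
      have hCA : ContinuousAt A τ := by
        refine ContinuousAt.congr ?_ hAB.symm
        exact ((((Ttail_hasDerivAt (g τ)).differentiableAt.continuousAt).comp hgc).const_mul
          _).neg
      exact hCA.continuousWithinAt
    · rw [heq]
      have hAt : A t = 0 := by simp [hAdef]
      unfold ContinuousWithinAt
      rw [hAt]
      have hsplit : Set.Icc (0:ℝ) t = Set.Ico 0 t ∪ {t} := (Set.Ico_union_right ht.le).symm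
      rw [hsplit, nhdsWithin_union, Filter.tendsto_sup]
      constructor
      · have hgtend : Tendsto g (nhdsWithin t (Set.Ico 0 t)) atTop := by
          have hnum : Tendsto (fun τ' : ℝ => y + τ') (nhdsWithin t (Set.Ico 0 t))
              (nhds (y + t)) := (continuous_const.add continuous_id).continuousWithinAt
          have hdent : Tendsto (fun τ' : ℝ => (2 * Real.sqrt (t - τ'))⁻¹)
              (nhdsWithin t (Set.Ico 0 t)) atTop := by
            apply tendsto_inv_nhdsGT_zero.comp
            rw [tendsto_nhdsWithin_iff]
            constructor
            · have hc : Tendsto (fun τ' : ℝ => 2 * Real.sqrt (t - τ'))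
                  (nhdsWithin t (Set.Ico 0 t)) (nhds (2 * Real.sqrt (t - t))) :=
                (continuous_const.mul
                  (Real.continuous_sqrt.comp (continuous_const.sub continuous_id))).continuousWithinAt
              simpa [sub_self] using hc
            · filter_upwards [self_mem_nhdsWithin] with τ' hτ'
              have h1 : (0:ℝ) < t - τ' := sub_pos.2 hτ'.2
              have h2 := Real.sqrt_pos.2 h1
              simp only [Set.mem_Ioi]
              positivity
          have hmul := hnum.pos_mul_atTop (by linarith : (0:ℝ) < y + t) hdent
          refine hmul.congr fun τ' => ?_
          simp only [hgdef, div_eq_mul_inv]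
        have hTt : Tendsto (fun τ' => -(2 / Real.sqrt π * Ttail (g τ')))
            (nhdsWithin t (Set.Ico 0 t)) (nhds 0) := by
          have h3 := (Ttail_tendsto.comp hgtend).const_mul (2 / Real.sqrt π)
          simpa using h3.neg
        refine hTt.congr' ?_
        filter_upwards [self_mem_nhdsWithin] with τ' hτ'
        simp [hAdef, hτ'.2]
      · rw [nhdsWithin_singleton, tendsto_pure_left]
        intro s hs
        simpa [hAt] using mem_of_mem_nhds hs
  -- nonnegativity of f
  have hposf : ∀ τ ∈ Set.Ioo (0:ℝ) t, 0 ≤ f τ := by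
    intro τ hτ
    have hs : (0:ℝ) < t - τ := sub_pos.2 hτ.2
    have hq : (0:ℝ) ≤ y + τ := by linarith [hτ.1]
    rw [hfdef]
    have h1 : (0:ℝ) ≤ (π * (t - τ)) ^ (-(1 : ℝ) / 2) := Real.rpow_nonneg (by positivity) _
    have h2 : (0:ℝ) ≤ 1 + (y + τ) / (2 * (t - τ)) := by positivity
    positivity
  -- integrability
  have hint : IntervalIntegrable f volume 0 t := by
    apply intervalIntegral.intervalIntegrable_deriv_of_nonneg
    · rwa [Set.uIcc_of_le ht.le]
    · intro x hx
      rw [min_eq_left ht.le, max_eq_right ht.le] at hx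
      exact hderiv x hx
    · intro x hx
      rw [min_eq_left ht.le, max_eq_right ht.le] at hx
      exact hposf x hx
  -- FTC
  have hFTC := intervalIntegral.integral_eq_sub_of_hasDeriv_right_of_le ht.le hcont
    (fun x hx => (hderiv x hx).hasDerivWithinAt) hint
  rw [hFTC]
  have hA0 : A 0 = -(2 / Real.sqrt π * Ttail (y / (2 * Real.sqrt t))) := by
    simp [hAdef, ht, hgdef]
  have hAt : A t = 0 := by simp [hAdef]
  rw [hA0, hAt, Ttail]
  ring
end

section
/- With H as above, for fixed y ∈ Ω̄ the function H(·,y,·) solves the heat equation ∂_t H = Δ_x H in Ω × (0,∞). -/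
open Real MeasureTheory Set

/-- The `N`-dimensional Gauss kernel `Γ_N(x,t) = (4πt)^{-N/2} e^{-|x|²/(4t)}`. -/
noncomputable def gauss (N : ℕ) (x : Fin N → ℝ) (t : ℝ) : ℝ :=
  (4 * π * t) ^ (-(N : ℝ) / 2) * Real.exp (-(∑ i, x i ^ 2) / (4 * t))

/-- Reflection `y* = (y', -y_N)` across the boundary of the half-space. -/
noncomputable def ystar (N : ℕ) (y : Fin (N + 1) → ℝ) : Fin (N + 1) → ℝ :=
  Function.update y (Fin.last N) (-(y (Fin.last N)))

/-- The last unit vector `e_N`. -/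
noncomputable def eN (N : ℕ) : Fin (N + 1) → ℝ := Pi.single (Fin.last N) 1

/-- `H(x,y,t) = -2 ∫_0^t (∂_{x_N}Γ_N)(x - y* + τ e_N, t - τ) dτ`. -/
noncomputable def hker (N : ℕ) (x y : Fin (N + 1) → ℝ) (t : ℝ) : ℝ :=
  -2 * ∫ τ in (0 : ℝ)..t,
    deriv (fun s => gauss (N + 1)
        (Function.update (x - ystar N y + τ • eN N) (Fin.last N) s) (t - τ))
      ((x - ystar N y + τ • eN N) (Fin.last N))

open Filter Topology Metric
open scoped Interval

noncomputable def PE (N : ℕ) (R c s : ℝ) : ℝ :=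
  (4 * π * s) ^ (-((N : ℝ) + 1) / 2) * Real.exp (-((R + c ^ 2) / (4 * s)))

noncomputable def V (N : ℕ) (R c s : ℝ) : ℝ := -(c / (2 * s)) * PE N R c s
noncomputable def Vc (N : ℕ) (R c s : ℝ) : ℝ := (c ^ 2 / (4 * s ^ 2) - 1 / (2 * s)) * PE N R c s
noncomputable def Vcc (N : ℕ) (R c s : ℝ) : ℝ :=
  (3 * c / (4 * s ^ 2) - c ^ 3 / (8 * s ^ 3)) * PE N R c s
noncomputable def VR (N : ℕ) (R c s : ℝ) : ℝ := (c / (8 * s ^ 2)) * PE N R c s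
noncomputable def VRR (N : ℕ) (R c s : ℝ) : ℝ := -(c / (32 * s ^ 3)) * PE N R c s
noncomputable def Vs (N : ℕ) (R c s : ℝ) : ℝ :=
  (((N : ℝ) + 3) * c / (4 * s ^ 2) - c * (R + c ^ 2) / (8 * s ^ 3)) * PE N R c s

lemma expo_ne (N : ℕ) : (-((N : ℝ) + 1) / 2) ≠ 0 := by
  have h : (0:ℝ) < ((N : ℝ) + 1) / 2 := by positivity
  rw [neg_div]
  exact neg_ne_zero.mpr (ne_of_gt h)

lemma PE_zero (N : ℕ) (R c : ℝ) : PE N R c 0 = 0 := by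
  have h4 : (4 * π * (0:ℝ)) = 0 := by ring
  rw [PE, h4, Real.zero_rpow (expo_ne N), zero_mul]

lemma PE_nonneg (N : ℕ) (R c : ℝ) {s : ℝ} (hs : 0 < s) : 0 ≤ PE N R c s := by
  unfold PE
  positivity

lemma hasDerivAt_PE_c (N : ℕ) (R c : ℝ) {s : ℝ} (hs : s ≠ 0) :
    HasDerivAt (fun c => PE N R c s) (V N R c s) c := by
  have h1 : HasDerivAt (fun c : ℝ => -((R + c ^ 2) / (4 * s))) (-(2 * c ^ 1 / (4 * s))) c :=
    (((hasDerivAt_pow 2 c).const_add R).div_const (4 * s)).neg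
  have h2 := (h1.exp).const_mul ((4 * π * s) ^ (-((N : ℝ) + 1) / 2))
  refine h2.congr_deriv ?_
  simp only [V, PE]
  field_simp
  ring

lemma hasDerivAt_V_c (N : ℕ) (R c : ℝ) {s : ℝ} (hs : s ≠ 0) :
    HasDerivAt (fun c => V N R c s) (Vc N R c s) c := by
  have h1 : HasDerivAt (fun c : ℝ => -(c / (2 * s))) (-(1 / (2 * s))) c :=
    ((hasDerivAt_id c).div_const (2 * s)).neg
  have h := h1.mul (hasDerivAt_PE_c N R c hs)
  refine h.congr_deriv ?_
  simp only [Vc, V]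
  field_simp
  ring

lemma hasDerivAt_Vc_c (N : ℕ) (R c : ℝ) {s : ℝ} (hs : s ≠ 0) :
    HasDerivAt (fun c => Vc N R c s) (Vcc N R c s) c := by
  have h1 : HasDerivAt (fun c : ℝ => c ^ 2 / (4 * s ^ 2) - 1 / (2 * s))
      (2 * c ^ 1 / (4 * s ^ 2)) c :=
    ((hasDerivAt_pow 2 c).div_const (4 * s ^ 2)).sub_const (1 / (2 * s))
  have h := h1.mul (hasDerivAt_PE_c N R c hs)
  refine h.congr_deriv ?_
  simp only [Vcc, Vc, V]
  field_simp
  ring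

lemma hasDerivAt_PE_R (N : ℕ) (c s : ℝ) (R : ℝ) :
    HasDerivAt (fun R => PE N R c s) (-(1 / (4 * s)) * PE N R c s) R := by
  have h1 : HasDerivAt (fun R : ℝ => -((R + c ^ 2) / (4 * s))) (-(1 / (4 * s))) R := by
    have := (((hasDerivAt_id R).add_const (c ^ 2)).div_const (4 * s)).neg
    simpa [Pi.neg_def] using this
  have h2 := (h1.exp).const_mul ((4 * π * s) ^ (-((N : ℝ) + 1) / 2))
  refine h2.congr_deriv ?_
  simp only [PE]
  ring

lemma hasDerivAt_V_R (N : ℕ) (c : ℝ) {s : ℝ} (R : ℝ) (hs : s ≠ 0) :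
    HasDerivAt (fun R => V N R c s) (VR N R c s) R := by
  have h := (hasDerivAt_PE_R N c s R).const_mul (-(c / (2 * s)))
  refine h.congr_deriv ?_
  simp only [VR, V]
  ring

lemma hasDerivAt_VR_R (N : ℕ) (c : ℝ) {s : ℝ} (R : ℝ) (hs : s ≠ 0) :
    HasDerivAt (fun R => VR N R c s) (VRR N R c s) R := by
  have h := (hasDerivAt_PE_R N c s R).const_mul (c / (8 * s ^ 2))
  refine h.congr_deriv ?_
  simp only [VRR, VR]
  ring

lemma expDecay {r : ℝ} (hr : 0 ≤ r) {a : ℝ} (ha : 0 < a) :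
    ∃ M : ℝ, 0 ≤ M ∧ ∀ s : ℝ, 0 < s → s ^ (-r) * Real.exp (-(a / s)) ≤ M := by
  have h := tendsto_rpow_mul_exp_neg_mul_atTop_nhds_zero r a ha
  have h1 : ∀ᶠ x : ℝ in atTop, x ^ r * Real.exp (-a * x) < 1 :=
    h.eventually_lt_const (by norm_num)
  obtain ⟨X, hX⟩ := eventually_atTop.mp h1
  refine ⟨max 1 ((max X 1) ^ r), le_trans zero_le_one (le_max_left _ _), fun s hs => ?_⟩
  have hxeq : s ^ (-r) * Real.exp (-(a / s)) = (s⁻¹) ^ r * Real.exp (-a * s⁻¹) := by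
    rw [Real.rpow_neg hs.le, ← Real.inv_rpow hs.le]
    ring_nf
  rw [hxeq]
  rcases le_or_gt X s⁻¹ with h'|h'
  · exact (hX _ h').le.trans (le_max_left _ _)
  · have hx0 : (0:ℝ) < s⁻¹ := by positivity
    have h2 : (s⁻¹) ^ r ≤ (max X 1) ^ r :=
      Real.rpow_le_rpow hx0.le (h'.le.trans (le_max_left _ _)) hr
    have h3 : Real.exp (-a * s⁻¹) ≤ 1 := by
      rw [Real.exp_le_one_iff]
      nlinarith
    calc (s⁻¹) ^ r * Real.exp (-a * s⁻¹) ≤ (max X 1) ^ r * 1 := by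
          apply mul_le_mul h2 h3 (Real.exp_pos _).le (Real.rpow_nonneg (le_trans zero_le_one (le_max_right X 1)) r)
      _ = (max X 1) ^ r := mul_one _
      _ ≤ max 1 ((max X 1) ^ r) := le_max_right _ _

lemma expDecay0 (r : ℝ) {a : ℝ} (ha : 0 < a) :
    Tendsto (fun s : ℝ => s ^ (-r) * Real.exp (-(a / s))) (nhdsWithin 0 (Ioi 0)) (𝓝 0) := by
  have h := tendsto_rpow_mul_exp_neg_mul_atTop_nhds_zero r a ha
  have hinv : Tendsto (fun s : ℝ => s⁻¹) (nhdsWithin 0 (Ioi 0)) atTop := tendsto_inv_nhdsGT_zero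
  refine (h.comp hinv).congr' ?_
  filter_upwards [self_mem_nhdsWithin] with s hs
  have hs' : (0:ℝ) < s := hs
  show (s⁻¹) ^ r * Real.exp (-a * s⁻¹) = s ^ (-r) * Real.exp (-(a / s))
  rw [Real.rpow_neg hs'.le, ← Real.inv_rpow hs'.le]
  ring_nf

lemma PE_le (N : ℕ) {R₀ b R c s : ℝ} (hR₀ : 0 ≤ R₀) (hb : 0 < b)
    (hR : R₀ - b^2/8 ≤ R) (hc : b/2 ≤ c) (hs : 0 < s) :
    PE N R c s ≤ (4*π) ^ (-((N:ℝ)+1)/2) * (s ^ (-(((N:ℝ)+1)/2)) * Real.exp (-(b^2/32 / s))) := by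
  have h4 : (0:ℝ) ≤ 4*π := by positivity
  have hmul : (4*π*s) ^ (-((N:ℝ)+1)/2) = (4*π) ^ (-((N:ℝ)+1)/2) * s ^ (-((N:ℝ)+1)/2) :=
    Real.mul_rpow h4 hs.le
  have hexp : Real.exp (-((R + c^2)/(4*s))) ≤ Real.exp (-(b^2/32 / s)) := by
    rw [Real.exp_le_exp]
    have hcb : b/2 ≤ c := hc
    have hc2 : b^2/4 ≤ c^2 := by nlinarith
    rw [neg_le_neg_iff]
    rw [div_le_div_iff₀ (by positivity) (by positivity)]
    nlinarith
  calc PE N R c s = (4*π) ^ (-((N:ℝ)+1)/2) * s ^ (-((N:ℝ)+1)/2) * Real.exp (-((R + c^2)/(4*s))) := by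
        rw [PE, hmul]
    _ ≤ (4*π) ^ (-((N:ℝ)+1)/2) * s ^ (-((N:ℝ)+1)/2) * Real.exp (-(b^2/32 / s)) := by
        apply mul_le_mul_of_nonneg_left hexp (by positivity)
    _ = (4*π) ^ (-((N:ℝ)+1)/2) * (s ^ (-(((N:ℝ)+1)/2)) * Real.exp (-(b^2/32 / s))) := by ring

lemma PE_div_bound (N : ℕ) {R₀ b : ℝ} (hR₀ : 0 ≤ R₀) (hb : 0 < b) (j : ℕ) :
    ∃ M : ℝ, 0 ≤ M ∧ ∀ {R c s : ℝ}, R₀ - b^2/8 ≤ R → b/2 ≤ c → 0 < s →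
      PE N R c s / s ^ j ≤ M := by
  have ha : (0:ℝ) < b^2/32 := by positivity
  obtain ⟨M, hM0, hM⟩ := expDecay (r := ((N:ℝ)+1)/2 + j) (by positivity) ha
  refine ⟨(4*π) ^ (-((N:ℝ)+1)/2) * M, by positivity, ?_⟩
  intro R c s hR hc hs
  have key := PE_le N hR₀ hb hR hc hs
  have hrw : s ^ (-(((N:ℝ)+1)/2)) / s ^ j = s ^ (-(((N:ℝ)+1)/2 + j)) := by
    rw [← Real.rpow_natCast s j, ← Real.rpow_sub hs]
    ring_nf
  calc PE N R c s / s ^ j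
      ≤ ((4*π) ^ (-((N:ℝ)+1)/2) * (s ^ (-(((N:ℝ)+1)/2)) * Real.exp (-(b^2/32 / s)))) / s ^ j := by
        gcongr
    _ = (4*π) ^ (-((N:ℝ)+1)/2) * ((s ^ (-(((N:ℝ)+1)/2)) / s ^ j) * Real.exp (-(b^2/32 / s))) := by
        ring
    _ = (4*π) ^ (-((N:ℝ)+1)/2) * (s ^ (-(((N:ℝ)+1)/2 + j)) * Real.exp (-(b^2/32 / s))) := by
        rw [hrw]
    _ ≤ (4*π) ^ (-((N:ℝ)+1)/2) * M := by
        apply mul_le_mul_of_nonneg_left (hM s hs) (by positivity)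

set_option maxHeartbeats 1000000 in
lemma master_bound (N : ℕ) {R₀ b K : ℝ} (hR₀ : 0 ≤ R₀) (hb : 0 < b) (hK : 0 ≤ K) :
    ∃ M : ℝ, 0 ≤ M ∧ ∀ {R c s : ℝ}, R₀ - b^2/8 ≤ R → R ≤ R₀ + 1 → b/2 ≤ c → c ≤ K → 0 < s →
      |V N R c s| ≤ M ∧ |Vc N R c s| ≤ M ∧ |Vcc N R c s| ≤ M ∧ |VR N R c s| ≤ M ∧
      |VRR N R c s| ≤ M ∧ |Vs N R c s| ≤ M := by
  obtain ⟨M₁, hM₁0, hM₁⟩ := PE_div_bound N hR₀ hb 1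
  obtain ⟨M₂, hM₂0, hM₂⟩ := PE_div_bound N hR₀ hb 2
  obtain ⟨M₃, hM₃0, hM₃⟩ := PE_div_bound N hR₀ hb 3
  refine ⟨(K/2) * M₁ + (K^2/4 + 1/2) * (M₁ + M₂) + (3*K/4 + K^3/8) * (M₂ + M₃)
      + (K/8) * M₂ + (K/32) * M₃ + (((N:ℝ)+3)*K/4 + K*(R₀+1+K^2)/8) * (M₂ + M₃),
    by positivity, ?_⟩
  intro R c s hR hR' hc hcK hs
  have hPE := PE_nonneg N R c hs
  have h1 := hM₁ hR hc hs
  have h2 := hM₂ hR hc hs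
  have h3 := hM₃ hR hc hs
  have hc0 : 0 < c := lt_of_lt_of_le (by positivity) hc
  have hRc : 0 < R + c^2 := by nlinarith
  have hV : |V N R c s| ≤ (K/2) * M₁ := by
    rw [V, abs_mul, abs_of_nonneg hPE, abs_neg, abs_of_nonneg (by positivity : (0:ℝ) ≤ c/(2*s))]
    calc c/(2*s) * PE N R c s = c/2 * (PE N R c s / s^1) := by ring
      _ ≤ K/2 * M₁ := by gcongr
  have hVc : |Vc N R c s| ≤ (K^2/4 + 1/2) * (M₁ + M₂) := by
    rw [Vc, abs_mul, abs_of_nonneg hPE]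
    have habs : |c^2/(4*s^2) - 1/(2*s)| ≤ c^2/(4*s^2) + 1/(2*s) := by
      refine (abs_sub _ _).trans ?_
      rw [abs_of_nonneg (by positivity), abs_of_nonneg (by positivity)]
    calc |c^2/(4*s^2) - 1/(2*s)| * PE N R c s ≤ (c^2/(4*s^2) + 1/(2*s)) * PE N R c s := by
          gcongr
      _ = c^2/4 * (PE N R c s / s^2) + 1/2 * (PE N R c s / s^1) := by ring
      _ ≤ K^2/4 * M₂ + 1/2 * M₁ := by gcongr
      _ ≤ (K^2/4 + 1/2) * (M₁ + M₂) := by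
          nlinarith [mul_nonneg (show (0:ℝ) ≤ K^2/4 by positivity) hM₁0,
            mul_nonneg (show (0:ℝ) ≤ (1:ℝ)/2 by norm_num) hM₂0]
  have hVcc : |Vcc N R c s| ≤ (3*K/4 + K^3/8) * (M₂ + M₃) := by
    rw [Vcc, abs_mul, abs_of_nonneg hPE]
    have habs : |3*c/(4*s^2) - c^3/(8*s^3)| ≤ 3*c/(4*s^2) + c^3/(8*s^3) := by
      refine (abs_sub _ _).trans ?_
      rw [abs_of_nonneg (by positivity), abs_of_nonneg (by positivity)]
    calc |3*c/(4*s^2) - c^3/(8*s^3)| * PE N R c s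
        ≤ (3*c/(4*s^2) + c^3/(8*s^3)) * PE N R c s := by gcongr
      _ = 3*c/4 * (PE N R c s / s^2) + c^3/8 * (PE N R c s / s^3) := by ring
      _ ≤ 3*K/4 * M₂ + K^3/8 * M₃ := by gcongr
      _ ≤ (3*K/4 + K^3/8) * (M₂ + M₃) := by
          nlinarith [mul_nonneg (show (0:ℝ) ≤ 3*K/4 by positivity) hM₃0,
            mul_nonneg (show (0:ℝ) ≤ K^3/8 by positivity) hM₂0]
  have hVR : |VR N R c s| ≤ (K/8) * M₂ := by
    rw [VR, abs_mul, abs_of_nonneg hPE, abs_of_nonneg (by positivity : (0:ℝ) ≤ c/(8*s^2))]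
    calc c/(8*s^2) * PE N R c s = c/8 * (PE N R c s / s^2) := by ring
      _ ≤ K/8 * M₂ := by gcongr
  have hVRR : |VRR N R c s| ≤ (K/32) * M₃ := by
    rw [VRR, abs_mul, abs_neg, abs_of_nonneg hPE,
      abs_of_nonneg (by positivity : (0:ℝ) ≤ c/(32*s^3))]
    calc c/(32*s^3) * PE N R c s = c/32 * (PE N R c s / s^3) := by ring
      _ ≤ K/32 * M₃ := by gcongr
  have hVs : |Vs N R c s| ≤ (((N:ℝ)+3)*K/4 + K*(R₀+1+K^2)/8) * (M₂ + M₃) := by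
    rw [Vs, abs_mul, abs_of_nonneg hPE]
    have habs : |((N:ℝ)+3)*c/(4*s^2) - c*(R+c^2)/(8*s^3)|
        ≤ ((N:ℝ)+3)*c/(4*s^2) + c*(R+c^2)/(8*s^3) := by
      refine (abs_sub _ _).trans ?_
      rw [abs_of_nonneg (by positivity), abs_of_nonneg (by positivity)]
    have hck2 : c^2 ≤ K^2 := by nlinarith
    have hRcK : R + c^2 ≤ R₀+1+K^2 := by linarith
    have hfac : c*(R+c^2) ≤ K*(R₀+1+K^2) := mul_le_mul hcK hRcK hRc.le hK
    calc |((N:ℝ)+3)*c/(4*s^2) - c*(R+c^2)/(8*s^3)| * PE N R c s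
        ≤ (((N:ℝ)+3)*c/(4*s^2) + c*(R+c^2)/(8*s^3)) * PE N R c s := by gcongr
      _ = ((N:ℝ)+3)*c/4 * (PE N R c s / s^2) + (c*(R+c^2))/8 * (PE N R c s / s^3) := by ring
      _ ≤ ((N:ℝ)+3)*K/4 * M₂ + (K*(R₀+1+K^2))/8 * M₃ := by
          have e1 : ((N:ℝ)+3)*c/4 * (PE N R c s / s^2) ≤ ((N:ℝ)+3)*K/4 * M₂ := by gcongr
          have e2 : (c*(R+c^2))/8 * (PE N R c s / s^3) ≤ (K*(R₀+1+K^2))/8 * M₃ := by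
            apply mul_le_mul (by linarith) h3 (by positivity) (by positivity)
          linarith
      _ ≤ (((N:ℝ)+3)*K/4 + K*(R₀+1+K^2)/8) * (M₂ + M₃) := by
          nlinarith [mul_nonneg (show (0:ℝ) ≤ ((N:ℝ)+3)*K/4 by positivity) hM₃0,
            mul_nonneg (show (0:ℝ) ≤ K*(R₀+1+K^2)/8 by positivity) hM₂0]
  have n1 : 0 ≤ (K/2) * M₁ := by positivity
  have n2 : 0 ≤ (K^2/4 + 1/2) * (M₁ + M₂) := by positivity
  have n3 : 0 ≤ (3*K/4 + K^3/8) * (M₂ + M₃) := by positivity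
  have n4 : 0 ≤ (K/8) * M₂ := by positivity
  have n5 : 0 ≤ (K/32) * M₃ := by positivity
  have n6 : 0 ≤ (((N:ℝ)+3)*K/4 + K*(R₀+1+K^2)/8) * (M₂ + M₃) := by positivity
  exact ⟨by linarith, by linarith, by linarith, by linarith, by linarith, by linarith⟩

lemma contAt_PE2 (N : ℕ) {q : ℝ × ℝ} (R : ℝ) (h : q.2 ≠ 0) :
    ContinuousAt (fun p : ℝ × ℝ => PE N R p.1 p.2) q := by
  simp only [PE]
  apply ContinuousAt.mul
  · exact (ContinuousAt.rpow_const (by fun_prop) (Or.inl (by simp [mul_ne_zero, pi_ne_zero, h])))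
  · exact ContinuousAt.rexp (ContinuousAt.neg
      (ContinuousAt.div (by fun_prop) (by fun_prop) (mul_ne_zero (by norm_num) h)))

lemma contAt_V2 (N : ℕ) {q : ℝ × ℝ} (R : ℝ) (h : q.2 ≠ 0) :
    ContinuousAt (fun p : ℝ × ℝ => V N R p.1 p.2) q := by
  simp only [V]
  exact ContinuousAt.mul (ContinuousAt.neg
    (ContinuousAt.div (by fun_prop) (by fun_prop) (mul_ne_zero (by norm_num) h)))
    (contAt_PE2 N R h)

lemma contAt_Vc2 (N : ℕ) {q : ℝ × ℝ} (R : ℝ) (h : q.2 ≠ 0) :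
    ContinuousAt (fun p : ℝ × ℝ => Vc N R p.1 p.2) q := by
  simp only [Vc]
  exact ContinuousAt.mul
    (ContinuousAt.sub
      (ContinuousAt.div (by fun_prop) (by fun_prop) (by simpa using pow_ne_zero 2 h))
      (ContinuousAt.div (by fun_prop) (by fun_prop) (mul_ne_zero (by norm_num) h)))
    (contAt_PE2 N R h)

lemma contAt_Vcc2 (N : ℕ) {q : ℝ × ℝ} (R : ℝ) (h : q.2 ≠ 0) :
    ContinuousAt (fun p : ℝ × ℝ => Vcc N R p.1 p.2) q := by
  simp only [Vcc]
  exact ContinuousAt.mul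
    (ContinuousAt.sub
      (ContinuousAt.div (by fun_prop) (by fun_prop) (by simpa using pow_ne_zero 2 h))
      (ContinuousAt.div (by fun_prop) (by fun_prop) (by simpa using pow_ne_zero 3 h)))
    (contAt_PE2 N R h)

lemma contAt_VR2 (N : ℕ) {q : ℝ × ℝ} (R : ℝ) (h : q.2 ≠ 0) :
    ContinuousAt (fun p : ℝ × ℝ => VR N R p.1 p.2) q := by
  simp only [VR]
  exact ContinuousAt.mul
    (ContinuousAt.div (by fun_prop) (by fun_prop) (by simpa using pow_ne_zero 2 h))
    (contAt_PE2 N R h)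

lemma contAt_VRR2 (N : ℕ) {q : ℝ × ℝ} (R : ℝ) (h : q.2 ≠ 0) :
    ContinuousAt (fun p : ℝ × ℝ => VRR N R p.1 p.2) q := by
  simp only [VRR]
  exact ContinuousAt.mul (ContinuousAt.neg
    (ContinuousAt.div (by fun_prop) (by fun_prop) (by simpa using pow_ne_zero 3 h)))
    (contAt_PE2 N R h)

lemma contAt_Vs2 (N : ℕ) {q : ℝ × ℝ} (R : ℝ) (h : q.2 ≠ 0) :
    ContinuousAt (fun p : ℝ × ℝ => Vs N R p.1 p.2) q := by
  simp only [Vs]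
  exact ContinuousAt.mul
    (ContinuousAt.sub
      (ContinuousAt.div (by fun_prop) (by fun_prop) (by simpa using pow_ne_zero 2 h))
      (ContinuousAt.div (by fun_prop) (by fun_prop) (by simpa using pow_ne_zero 3 h)))
    (contAt_PE2 N R h)

lemma contAt_comp1 {G : ℝ × ℝ → ℝ} {w σ₀ : ℝ}
    (h : ContinuousAt G (w - σ₀, σ₀)) : ContinuousAt (fun σ : ℝ => G (w - σ, σ)) σ₀ := by
  have hg : ContinuousAt (fun σ : ℝ => ((w - σ, σ) : ℝ × ℝ)) σ₀ := by fun_prop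
  exact ContinuousAt.comp (f := fun σ : ℝ => ((w - σ, σ) : ℝ × ℝ)) (g := G) h hg

lemma intervalIntegrable_of_bdd {f : ℝ → ℝ} {u M : ℝ} (hu : 0 ≤ u)
    (hc : ∀ σ ∈ Ioc (0:ℝ) u, ContinuousAt f σ) (hb : ∀ σ ∈ Ioc (0:ℝ) u, |f σ| ≤ M) :
    IntervalIntegrable f volume 0 u := by
  rw [intervalIntegrable_iff, uIoc_of_le hu]
  refine ⟨ContinuousOn.aestronglyMeasurable (fun σ hσ => (hc σ hσ).continuousWithinAt)
    measurableSet_Ioc, HasFiniteIntegral.restrict_of_bounded (C := M) measure_Ioc_lt_top ?_⟩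
  exact (ae_restrict_mem measurableSet_Ioc).mono
    (fun σ hσ => by rw [Real.norm_eq_abs]; exact hb σ hσ)

lemma hasDerivAt_param {u : ℝ} (hu : 0 < u) {ε M : ℝ} (hε : 0 < ε) {F F' : ℝ → ℝ → ℝ} {w₀ : ℝ}
    (hcont : ∀ w ∈ ball w₀ ε, ∀ σ ∈ Ioc (0:ℝ) u, ContinuousAt (fun σ => F w σ) σ)
    (hcont' : ∀ σ ∈ Ioc (0:ℝ) u, ContinuousAt (fun σ => F' w₀ σ) σ)
    (hbF : ∀ σ ∈ Ioc (0:ℝ) u, |F w₀ σ| ≤ M)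
    (hb : ∀ σ ∈ Ioc (0:ℝ) u, ∀ w ∈ ball w₀ ε, |F' w σ| ≤ M)
    (hd : ∀ σ ∈ Ioc (0:ℝ) u, ∀ w ∈ ball w₀ ε, HasDerivAt (fun w => F w σ) (F' w σ) w) :
    HasDerivAt (fun w => ∫ σ in (0:ℝ)..u, F w σ) (∫ σ in (0:ℝ)..u, F' w₀ σ) w₀ := by
  have hIoc : Ι (0:ℝ) u = Ioc 0 u := uIoc_of_le hu.le
  refine (intervalIntegral.hasDerivAt_integral_of_dominated_loc_of_deriv_le
    (bound := fun _ => M) (ball_mem_nhds w₀ hε) ?_ ?_ ?_ ?_ ?_ ?_).2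
  · filter_upwards [ball_mem_nhds w₀ hε] with w hw
    rw [hIoc]
    exact ContinuousOn.aestronglyMeasurable
      (fun σ hσ => (hcont w hw σ hσ).continuousWithinAt) measurableSet_Ioc
  · exact intervalIntegrable_of_bdd hu.le (hcont w₀ (mem_ball_self hε)) hbF
  · rw [hIoc]
    exact ContinuousOn.aestronglyMeasurable
      (fun σ hσ => (hcont' σ hσ).continuousWithinAt) measurableSet_Ioc
  · exact Eventually.of_forall (fun σ hσ w hw => by
      rw [Real.norm_eq_abs]; exact hb σ (hIoc ▸ hσ) w hw)
  · exact intervalIntegrable_const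
  · exact Eventually.of_forall (fun σ hσ w hw => hd σ (hIoc ▸ hσ) w hw)

noncomputable def rad (b : ℝ) : ℝ := min (b/2) (min (b^2/8) 1)

lemma rad_pos {b : ℝ} (hb : 0 < b) : 0 < rad b := by
  unfold rad; positivity

lemma rad_le1 {b : ℝ} : rad b ≤ b/2 := min_le_left _ _
lemma rad_le2 {b : ℝ} : rad b ≤ b^2/8 := le_trans (min_le_right _ _) (min_le_left _ _)
lemma rad_le3 {b : ℝ} : rad b ≤ 1 := le_trans (min_le_right _ _) (min_le_right _ _)

lemma hasDerivAt_L_w (N : ℕ) {R b t : ℝ} (hR : 0 ≤ R) (hb : 0 < b) (ht : 0 < t)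
    {w₁ : ℝ} (hw₁ : |w₁ - (b + t)| < rad b / 2) :
    HasDerivAt (fun w => ∫ σ in (0:ℝ)..t, V N R (w - σ) σ)
      (∫ σ in (0:ℝ)..t, Vc N R (w₁ - σ) σ) w₁ := by
  obtain ⟨M, hM0, hM⟩ := master_bound N (R₀ := R) (b := b) (K := 2*b+t) hR hb (by positivity)
  have hρ := rad_pos hb
  have hreg : ∀ w ∈ ball w₁ (rad b / 2), ∀ σ ∈ Ioc (0:ℝ) t,
      R - b^2/8 ≤ R ∧ R ≤ R + 1 ∧ b/2 ≤ w - σ ∧ w - σ ≤ 2*b+t := by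
    intro w hw σ hσ
    rw [mem_ball, Real.dist_eq] at hw
    have h1 : |w - (b+t)| < rad b := by
      calc |w - (b+t)| ≤ |w - w₁| + |w₁ - (b+t)| := abs_sub_le _ _ _
        _ < rad b / 2 + rad b / 2 := by exact add_lt_add hw hw₁
        _ = rad b := by ring
    have h2 := abs_lt.mp h1
    have hb2 := rad_le1 (b := b)
    refine ⟨by nlinarith [sq_nonneg b], le_add_of_nonneg_right zero_le_one, ?_, ?_⟩
    · nlinarith [hσ.2]
    · nlinarith [hσ.1]
  refine hasDerivAt_param (F := fun w σ => V N R (w - σ) σ)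
    (F' := fun w σ => Vc N R (w - σ) σ) (M := M) ht (half_pos hρ) ?_ ?_ ?_ ?_ ?_
  · intro w hw σ hσ
    exact contAt_comp1 (contAt_V2 N R (ne_of_gt hσ.1))
  · intro σ hσ
    exact contAt_comp1 (contAt_Vc2 N R (ne_of_gt hσ.1))
  · intro σ hσ
    obtain ⟨e1, e2, e3, e4⟩ := hreg w₁ (mem_ball_self (half_pos hρ)) σ hσ
    exact (hM e1 e2 e3 e4 hσ.1).1
  · intro σ hσ w hw
    obtain ⟨e1, e2, e3, e4⟩ := hreg w hw σ hσ
    exact (hM e1 e2 e3 e4 hσ.1).2.1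
  · intro σ hσ w hw
    have h := (hasDerivAt_V_c N R (w - σ) (ne_of_gt hσ.1)).comp w ((hasDerivAt_id w).sub_const σ)
    simpa [Function.comp_def] using h

lemma hasDerivAt_L_ww (N : ℕ) {R b t : ℝ} (hR : 0 ≤ R) (hb : 0 < b) (ht : 0 < t) :
    HasDerivAt (fun w => ∫ σ in (0:ℝ)..t, Vc N R (w - σ) σ)
      (∫ σ in (0:ℝ)..t, Vcc N R ((b + t) - σ) σ) (b + t) := by
  obtain ⟨M, hM0, hM⟩ := master_bound N (R₀ := R) (b := b) (K := 2*b+t) hR hb (by positivity)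
  have hρ := rad_pos hb
  have hreg : ∀ w ∈ ball (b+t) (rad b), ∀ σ ∈ Ioc (0:ℝ) t,
      b/2 ≤ w - σ ∧ w - σ ≤ 2*b+t := by
    intro w hw σ hσ
    rw [mem_ball, Real.dist_eq] at hw
    have h2 := abs_lt.mp hw
    have hb2 := rad_le1 (b := b)
    constructor
    · nlinarith [hσ.2]
    · nlinarith [hσ.1]
  refine hasDerivAt_param (F := fun w σ => Vc N R (w - σ) σ)
    (F' := fun w σ => Vcc N R (w - σ) σ) (M := M) ht hρ ?_ ?_ ?_ ?_ ?_
  · intro w hw σ hσ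
    exact contAt_comp1 (contAt_Vc2 N R (ne_of_gt hσ.1))
  · intro σ hσ
    exact contAt_comp1 (contAt_Vcc2 N R (ne_of_gt hσ.1))
  · intro σ hσ
    obtain ⟨e3, e4⟩ := hreg _ (mem_ball_self hρ) σ hσ
    exact (hM (by nlinarith [sq_nonneg b]) (le_add_of_nonneg_right zero_le_one) e3 e4 hσ.1).2.1
  · intro σ hσ w hw
    obtain ⟨e3, e4⟩ := hreg w hw σ hσ
    exact (hM (by nlinarith [sq_nonneg b]) (le_add_of_nonneg_right zero_le_one) e3 e4 hσ.1).2.2.1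
  · intro σ hσ w hw
    have h := (hasDerivAt_Vc_c N R (w - σ) (ne_of_gt hσ.1)).comp w ((hasDerivAt_id w).sub_const σ)
    simpa [Function.comp_def] using h

lemma hasDerivAt_L_R (N : ℕ) {R b t : ℝ} (hR : 0 ≤ R) (hb : 0 < b) (ht : 0 < t)
    {R₁ : ℝ} (hR₁ : |R₁ - R| < rad b / 2) :
    HasDerivAt (fun r => ∫ σ in (0:ℝ)..t, V N r ((b + t) - σ) σ)
      (∫ σ in (0:ℝ)..t, VR N R₁ ((b + t) - σ) σ) R₁ := by
  obtain ⟨M, hM0, hM⟩ := master_bound N (R₀ := R) (b := b) (K := 2*b+t) hR hb (by positivity)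
  have hρ := rad_pos hb
  have hreg : ∀ r ∈ ball R₁ (rad b / 2), ∀ σ ∈ Ioc (0:ℝ) t,
      (R - b^2/8 ≤ r ∧ r ≤ R + 1) ∧ b/2 ≤ (b+t) - σ ∧ (b+t) - σ ≤ 2*b+t := by
    intro r hr σ hσ
    rw [mem_ball, Real.dist_eq] at hr
    have h1 : |r - R| < rad b := by
      calc |r - R| ≤ |r - R₁| + |R₁ - R| := abs_sub_le _ _ _
        _ < rad b / 2 + rad b / 2 := add_lt_add hr hR₁
        _ = rad b := by ring
    have h2 := abs_lt.mp h1
    have hb2 := rad_le2 (b := b)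
    have hb3 := rad_le3 (b := b)
    have hb1 := rad_le1 (b := b)
    exact ⟨⟨by linarith, by linarith⟩, by nlinarith [hσ.2], by nlinarith [hσ.1]⟩
  refine hasDerivAt_param (F := fun r σ => V N r ((b+t) - σ) σ)
    (F' := fun r σ => VR N r ((b+t) - σ) σ) (M := M) ht (half_pos hρ) ?_ ?_ ?_ ?_ ?_
  · intro r hr σ hσ
    have := contAt_comp1 (w := b+t) (G := fun p : ℝ × ℝ => V N r p.1 p.2)
      (contAt_V2 N r (q := ((b+t) - σ, σ)) (ne_of_gt hσ.1))
    exact this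
  · intro σ hσ
    exact contAt_comp1 (contAt_VR2 N R₁ (ne_of_gt hσ.1))
  · intro σ hσ
    obtain ⟨⟨e1, e2⟩, e3, e4⟩ := hreg _ (mem_ball_self (half_pos hρ)) σ hσ
    exact (hM e1 e2 e3 e4 hσ.1).1
  · intro σ hσ r hr
    obtain ⟨⟨e1, e2⟩, e3, e4⟩ := hreg r hr σ hσ
    exact (hM e1 e2 e3 e4 hσ.1).2.2.2.1
  · intro σ hσ r hr
    exact hasDerivAt_V_R N ((b+t) - σ) r (ne_of_gt hσ.1)

lemma hasDerivAt_L_RR (N : ℕ) {R b t : ℝ} (hR : 0 ≤ R) (hb : 0 < b) (ht : 0 < t) :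
    HasDerivAt (fun r => ∫ σ in (0:ℝ)..t, VR N r ((b + t) - σ) σ)
      (∫ σ in (0:ℝ)..t, VRR N R ((b + t) - σ) σ) R := by
  obtain ⟨M, hM0, hM⟩ := master_bound N (R₀ := R) (b := b) (K := 2*b+t) hR hb (by positivity)
  have hρ := rad_pos hb
  have hreg : ∀ r ∈ ball R (rad b), ∀ σ ∈ Ioc (0:ℝ) t,
      (R - b^2/8 ≤ r ∧ r ≤ R + 1) ∧ b/2 ≤ (b+t) - σ ∧ (b+t) - σ ≤ 2*b+t := by
    intro r hr σ hσ
    rw [mem_ball, Real.dist_eq] at hr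
    have h2 := abs_lt.mp hr
    have hb2 := rad_le2 (b := b)
    have hb3 := rad_le3 (b := b)
    have hb1 := rad_le1 (b := b)
    exact ⟨⟨by linarith, by linarith⟩, by nlinarith [hσ.2], by nlinarith [hσ.1]⟩
  refine hasDerivAt_param (F := fun r σ => VR N r ((b+t) - σ) σ)
    (F' := fun r σ => VRR N r ((b+t) - σ) σ) (M := M) ht hρ ?_ ?_ ?_ ?_ ?_
  · intro r hr σ hσ
    exact contAt_comp1 (w := b+t) (G := fun p : ℝ × ℝ => VR N r p.1 p.2)
      (contAt_VR2 N r (q := ((b+t) - σ, σ)) (ne_of_gt hσ.1))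
  · intro σ hσ
    exact contAt_comp1 (contAt_VRR2 N R (ne_of_gt hσ.1))
  · intro σ hσ
    obtain ⟨⟨e1, e2⟩, e3, e4⟩ := hreg _ (mem_ball_self hρ) σ hσ
    exact (hM e1 e2 e3 e4 hσ.1).2.2.2.1
  · intro σ hσ r hr
    obtain ⟨⟨e1, e2⟩, e3, e4⟩ := hreg r hr σ hσ
    exact (hM e1 e2 e3 e4 hσ.1).2.2.2.2.1
  · intro σ hσ r hr
    exact hasDerivAt_VR_R N ((b+t) - σ) r (ne_of_gt hσ.1)

lemma V_zero (N : ℕ) (R c : ℝ) : V N R c 0 = 0 := by rw [V, PE_zero, mul_zero]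

lemma heat_id (N : ℕ) (R c s : ℝ) :
    Vcc N R c s + 2*(N:ℝ)*VR N R c s + 4*R*VRR N R c s = Vs N R c s := by
  rcases eq_or_ne s 0 with h|h
  · subst h
    simp only [Vcc, VR, VRR, Vs, PE_zero, mul_zero]
    ring
  · simp only [Vcc, VR, VRR, Vs]
    field_simp
    ring

lemma hasDerivAt_V_time (N : ℕ) (R w : ℝ) {σ : ℝ} (hσ : 0 < σ) :
    HasDerivAt (fun σ => V N R (w - σ) σ) (Vs N R (w - σ) σ - Vc N R (w - σ) σ) σ := by
  have hbase : (0:ℝ) < 4 * π * σ := by positivity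
  have hA := (((hasDerivAt_id σ).const_sub w).div ((hasDerivAt_id σ).const_mul 2)
    (by positivity : (2:ℝ) * id σ ≠ 0)).neg
  have hB : HasDerivAt (fun σ : ℝ => (4 * π * σ) ^ (-((N:ℝ)+1)/2))
      ((4*π) * (-((N:ℝ)+1)/2) * (4*π*σ) ^ (-((N:ℝ)+1)/2 - 1)) σ := by
    have h := ((hasDerivAt_id σ).const_mul (4*π)).rpow_const
      (p := -((N:ℝ)+1)/2) (Or.inl (ne_of_gt hbase))
    simpa using h
  have hC := (((((hasDerivAt_id σ).const_sub w).pow 2).const_add R).div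
    ((hasDerivAt_id σ).const_mul 4) (by positivity : (4:ℝ) * id σ ≠ 0)).neg.exp
  have htot := hA.mul (hB.mul hC)
  have hfun : (fun σ : ℝ => V N R (w - σ) σ)
      = fun σ : ℝ => -((w - σ) / (2 * σ)) * ((4 * π * σ) ^ (-((N:ℝ)+1)/2) *
          Real.exp (-((R + (w - σ) ^ 2) / (4 * σ)))) := by
    funext σ; rw [V, PE]
  rw [hfun]
  refine htot.congr_deriv ?_
  simp only [Vs, Vc, PE, id_eq, Pi.mul_apply, Pi.div_apply, Pi.neg_apply, Pi.pow_apply, Pi.add_apply]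
  rw [Real.rpow_sub_one (ne_of_gt hbase)]
  field_simp
  ring

lemma V_decay (N : ℕ) {R b K : ℝ} (hR : 0 ≤ R) (hb : 0 < b) (hK : 0 ≤ K)
    {c s : ℝ} (hc : b/2 ≤ c) (hcK : c ≤ K) (hs : 0 < s) :
    |V N R c s| ≤ K/2 * ((4*π) ^ (-((N:ℝ)+1)/2) *
      (s ^ (-(((N:ℝ)+1)/2 + 1)) * Real.exp (-(b^2/32 / s)))) := by
  have hPE := PE_le N hR hb (by linarith [sq_nonneg b] : R - b^2/8 ≤ R) hc hs
  have hPE0 : 0 ≤ PE N R c s := by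
    unfold PE; positivity
  have hc0 : 0 < c := lt_of_lt_of_le (by positivity) hc
  have hrw : s ^ (-(((N:ℝ)+1)/2)) / s = s ^ (-(((N:ℝ)+1)/2 + 1)) := by
    rw [show (-(((N:ℝ)+1)/2 + 1)) = (-(((N:ℝ)+1)/2)) + (-1) by ring, Real.rpow_add hs,
      Real.rpow_neg_one, div_eq_mul_inv]
  rw [V, abs_mul, abs_neg, abs_of_nonneg hPE0,
    abs_of_nonneg (by positivity : (0:ℝ) ≤ c/(2*s))]
  calc c/(2*s) * PE N R c s = c/2 * (PE N R c s / s) := by ring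
    _ ≤ K/2 * (((4*π) ^ (-((N:ℝ)+1)/2) * (s ^ (-(((N:ℝ)+1)/2)) * Real.exp (-(b^2/32 / s)))) / s) := by
        gcongr
    _ = K/2 * ((4*π) ^ (-((N:ℝ)+1)/2) * ((s ^ (-(((N:ℝ)+1)/2)) / s) * Real.exp (-(b^2/32 / s)))) := by
        ring
    _ = K/2 * ((4*π) ^ (-((N:ℝ)+1)/2) * (s ^ (-(((N:ℝ)+1)/2 + 1)) * Real.exp (-(b^2/32 / s)))) := by
        rw [hrw]

lemma cont_at_zero (N : ℕ) {R b t : ℝ} (hR : 0 ≤ R) (hb : 0 < b) (ht : 0 < t) :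
    ContinuousWithinAt (fun σ => V N R ((b + t) - σ) σ) (Icc 0 t) 0 := by
  have ha : (0:ℝ) < b^2/32 := by positivity
  set μ : ℝ := ((N:ℝ)+1)/2 with hμ
  set C : ℝ := (2*b+t)/2 * (4*π) ^ (-((N:ℝ)+1)/2) with hC
  have hC0 : 0 ≤ C := by rw [hC]; positivity
  have hbnd : ∀ σ ∈ Icc (0:ℝ) t, ‖V N R ((b + t) - σ) σ‖
      ≤ C * (σ ^ (-(((N:ℝ)+1)/2 + 1)) * Real.exp (-(b^2/32 / σ))) := by
    intro σ hσ
    rcases eq_or_lt_of_le hσ.1 with h0|h0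
    · rw [← h0]
      have hz : (0:ℝ) ^ (-(((N:ℝ)+1)/2 + 1)) = 0 := Real.zero_rpow (by positivity |> ne_of_gt |> (neg_ne_zero.mpr ·))
      rw [Real.norm_eq_abs, V_zero, abs_zero, hz]
      simp
    · have hcc : b/2 ≤ (b + t) - σ := by nlinarith [hσ.2]
      have hKK : (b + t) - σ ≤ 2*b+t := by nlinarith [h0]
      have := V_decay N hR hb (K := 2*b+t) (by positivity) hcc hKK h0
      rw [Real.norm_eq_abs]
      calc |V N R ((b+t) - σ) σ| ≤ (2*b+t)/2 * ((4*π) ^ (-((N:ℝ)+1)/2) *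
            (σ ^ (-(((N:ℝ)+1)/2 + 1)) * Real.exp (-(b^2/32 / σ)))) := this
        _ = C * (σ ^ (-(((N:ℝ)+1)/2 + 1)) * Real.exp (-(b^2/32 / σ))) := by rw [hC]; ring
  have hlim : Tendsto (fun σ : ℝ => C * (σ ^ (-(((N:ℝ)+1)/2 + 1)) * Real.exp (-(b^2/32 / σ))))
      (nhdsWithin 0 (Icc 0 t)) (𝓝 0) := by
    have h1 : Tendsto (fun σ : ℝ => C * (σ ^ (-(((N:ℝ)+1)/2 + 1)) * Real.exp (-(b^2/32 / σ))))
        (nhdsWithin 0 (Ioi 0)) (𝓝 0) := by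
      have := (expDecay0 (((N:ℝ)+1)/2 + 1) ha).const_mul C
      simpa using this
    have h2 : Tendsto (fun σ : ℝ => C * (σ ^ (-(((N:ℝ)+1)/2 + 1)) * Real.exp (-(b^2/32 / σ))))
        (nhdsWithin 0 {0}) (𝓝 0) := by
      rw [nhdsWithin_singleton]
      have hz : (0:ℝ) ^ (-(((N:ℝ)+1)/2 + 1)) = 0 := Real.zero_rpow (by positivity |> ne_of_gt |> (neg_ne_zero.mpr ·))
      have h3 := tendsto_pure_nhds (fun σ : ℝ => C * (σ ^ (-(((N:ℝ)+1)/2 + 1)) * Real.exp (-(b^2/32 / σ)))) 0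
      have hf0 : C * ((0:ℝ) ^ (-(((N:ℝ)+1)/2 + 1)) * Real.exp (-(b^2/32 / (0:ℝ)))) = 0 := by
        rw [hz]; ring
      rw [hf0] at h3
      exact h3
    have hsub : nhdsWithin (0:ℝ) (Icc 0 t) ≤ nhdsWithin 0 (Ioi 0) ⊔ nhdsWithin 0 {0} := by
      rw [← nhdsWithin_union]
      apply nhdsWithin_mono
      intro σ hσ
      rcases eq_or_lt_of_le hσ.1 with h|h
      · exact Or.inr (by simp [← h])
      · exact Or.inl h
    exact (tendsto_sup.mpr ⟨h1, h2⟩).mono_left hsub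
  have := squeeze_zero_norm' (Eventually.mono self_mem_nhdsWithin hbnd) hlim
  have hval : V N R ((b + t) - 0) 0 = 0 := by rw [V_zero]
  unfold ContinuousWithinAt
  rw [show (fun σ => V N R ((b + t) - σ) σ) 0 = 0 from by simpa using hval]
  exact this

lemma ftc_key (N : ℕ) {R b t : ℝ} (hR : 0 ≤ R) (hb : 0 < b) (ht : 0 < t) :
    ∫ σ in (0:ℝ)..t, (Vs N R ((b + t) - σ) σ - Vc N R ((b + t) - σ) σ) = V N R b t := by
  obtain ⟨M, hM0, hM⟩ := master_bound N (R₀ := R) (b := b) (K := 2*b+t) hR hb (by positivity)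
  have hreg : ∀ σ ∈ Ioc (0:ℝ) t, b/2 ≤ (b+t) - σ ∧ (b+t) - σ ≤ 2*b+t := by
    intro σ hσ
    constructor
    · nlinarith [hσ.2]
    · nlinarith [hσ.1]
  have hint : IntervalIntegrable
      (fun σ => Vs N R ((b + t) - σ) σ - Vc N R ((b + t) - σ) σ) volume 0 t := by
    apply intervalIntegrable_of_bdd (M := 2*M) ht.le
    · intro σ hσ
      exact ContinuousAt.sub (contAt_comp1 (contAt_Vs2 N R (ne_of_gt hσ.1)))
        (contAt_comp1 (contAt_Vc2 N R (ne_of_gt hσ.1)))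
    · intro σ hσ
      obtain ⟨e3, e4⟩ := hreg σ hσ
      have h1 := (hM (by nlinarith [sq_nonneg b]) (le_add_of_nonneg_right zero_le_one) e3 e4 hσ.1).2.2.2.2.2
      have h2 := (hM (by nlinarith [sq_nonneg b]) (le_add_of_nonneg_right zero_le_one) e3 e4 hσ.1).2.1
      calc |Vs N R ((b+t) - σ) σ - Vc N R ((b+t) - σ) σ|
          ≤ |Vs N R ((b+t) - σ) σ| + |Vc N R ((b+t) - σ) σ| := abs_sub _ _
        _ ≤ 2*M := by linarith
  have hcont : ContinuousOn (fun σ => V N R ((b + t) - σ) σ) (Icc 0 t) := by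
    intro σ hσ
    rcases eq_or_lt_of_le hσ.1 with h0|h0
    · rw [← h0]; exact cont_at_zero N hR hb ht
    · exact (contAt_comp1 (contAt_V2 N R (ne_of_gt h0))).continuousWithinAt
  have hderiv : ∀ σ ∈ Ioo (0:ℝ) t, HasDerivWithinAt (fun σ => V N R ((b + t) - σ) σ)
      (Vs N R ((b + t) - σ) σ - Vc N R ((b + t) - σ) σ) (Ioi σ) σ :=
    fun σ hσ => (hasDerivAt_V_time N R (b+t) hσ.1).hasDerivWithinAt
  have key := intervalIntegral.integral_eq_sub_of_hasDeriv_right_of_le ht.le hcont hderiv hint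
  rw [key]
  have h1 : (b + t) - t = b := by ring
  rw [h1, show (b + t) - (0:ℝ) = b + t by ring, V_zero, sub_zero]

lemma integrable_V_shift (N : ℕ) {R b t : ℝ} (hR : 0 ≤ R) (hb : 0 < b) (ht : 0 < t)
    {u : ℝ} (hu : |u - t| < rad b / 2) (hut : |u - t| < t/2) :
    IntervalIntegrable (fun σ => V N R (b + u - σ) σ) volume 0 t := by
  obtain ⟨M, hM0, hM⟩ := master_bound N (R₀ := R) (b := b) (K := 2*b+t) hR hb (by positivity)
  have h2 := abs_lt.mp hu
  have hb1 := rad_le1 (b := b)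
  apply intervalIntegrable_of_bdd (M := M) ht.le
  · intro σ hσ
    exact contAt_comp1 (w := b + u) (contAt_V2 N R (ne_of_gt hσ.1))
  · intro σ hσ
    have e3 : b/2 ≤ (b + u) - σ := by nlinarith [hσ.2]
    have e4 : (b + u) - σ ≤ 2*b+t := by nlinarith [hσ.1, abs_lt.mp hut]
    have := (hM (by nlinarith [sq_nonneg b]) (le_add_of_nonneg_right zero_le_one) e3 e4 hσ.1).1
    exact this

lemma hasDerivAt_D (N : ℕ) {R b t : ℝ} (hR : 0 ≤ R) (hb : 0 < b) (ht : 0 < t) :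
    HasDerivAt (fun u => ∫ σ in (0:ℝ)..u, V N R (b + u - σ) σ)
      (V N R b t + ∫ σ in (0:ℝ)..t, Vc N R ((b + t) - σ) σ) t := by
  have hρ := rad_pos hb
  set δ : ℝ := min (rad b / 2) (t/2) with hδdef
  have hδ : 0 < δ := by positivity
  -- the Φ part
  have hΦ : HasDerivAt (fun u => ∫ σ in (0:ℝ)..t, V N R (b + u - σ) σ)
      (∫ σ in (0:ℝ)..t, Vc N R ((b + t) - σ) σ) t := by
    have h := (hasDerivAt_L_w N hR hb ht (w₁ := b + t)
      (by simpa using half_pos hρ)).comp t ((hasDerivAt_id t).const_add b)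
    simpa [Function.comp_def] using h
  -- the Ψ part
  have hΨ : HasDerivAt (fun u => ∫ σ in t..u, V N R (b + u - σ) σ) (V N R b t) t := by
    rw [hasDerivAt_iff_isLittleO]
    simp only [intervalIntegral.integral_same, sub_zero]
    rw [Asymptotics.isLittleO_iff]
    intro ε' hε'
    have hct : ContinuousAt (fun p : ℝ × ℝ => V N R (b + p.1 - p.2) p.2) (t, t) := by
      have hmap : ContinuousAt (fun p : ℝ × ℝ => ((b + p.1 - p.2, p.2) : ℝ × ℝ)) (t, t) := by
        fun_prop
      exact ContinuousAt.comp (f := fun p : ℝ × ℝ => ((b + p.1 - p.2, p.2) : ℝ × ℝ))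
        (g := fun q : ℝ × ℝ => V N R q.1 q.2)
        (contAt_V2 N R (q := (b + t - t, t)) (ne_of_gt ht)) hmap
    rw [Metric.continuousAt_iff] at hct
    obtain ⟨δ', hδ'0, hδ'⟩ := hct ε' hε'
    have hmem : ∀ᶠ u in 𝓝 t, u ∈ ball t (min δ' (t/2)) :=
      ball_mem_nhds t (by positivity)
    filter_upwards [hmem] with u hu
    rw [mem_ball, Real.dist_eq] at hu
    have hu1 : |u - t| < δ' := lt_of_lt_of_le hu (min_le_left _ _)
    have hu2 : |u - t| < t/2 := lt_of_lt_of_le hu (min_le_right _ _)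
    have habs := abs_lt.mp hu2
    -- integrability on t..u
    have hcont : ContinuousOn (fun σ => V N R (b + u - σ) σ) (uIcc t u) := by
      intro σ hσ
      have hσl : t/2 < σ := by
        rcases le_total t u with h|h
        · have := (uIcc_of_le h ▸ hσ).1; linarith
        · have := (uIcc_of_ge h ▸ hσ).1; linarith
      exact (contAt_comp1 (w := b + u) (contAt_V2 N R (ne_of_gt (by linarith)))).continuousWithinAt
    have hInt : IntervalIntegrable (fun σ => V N R (b + u - σ) σ) volume t u :=
      hcont.intervalIntegrable
    have hsub : (∫ σ in t..u, V N R (b + u - σ) σ) - (u - t) • V N R b t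
        = ∫ σ in t..u, (V N R (b + u - σ) σ - V N R b t) := by
      rw [intervalIntegral.integral_sub hInt intervalIntegrable_const,
        intervalIntegral.integral_const]
    rw [hsub]
    have hbound : ∀ σ ∈ Ι t u, ‖V N R (b + u - σ) σ - V N R b t‖ ≤ ε' := by
      intro σ hσ
      have hσtu : |σ - t| ≤ |u - t| := by
        rcases le_total t u with h|h
        · have h1 := (uIoc_of_le h ▸ hσ)
          rw [abs_of_nonneg (by linarith [h1.1] : (0:ℝ) ≤ σ - t),
            abs_of_nonneg (by linarith : (0:ℝ) ≤ u - t)]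
          linarith [h1.2]
        · have h1 := (uIoc_of_ge h ▸ hσ)
          rw [abs_of_nonpos (by linarith [h1.2] : σ - t ≤ (0:ℝ)),
            abs_of_nonpos (by linarith : u - t ≤ (0:ℝ))]
          linarith [h1.1]
      have hdist : dist ((u, σ) : ℝ × ℝ) ((t, t) : ℝ × ℝ) < δ' := by
        rw [Prod.dist_eq]
        apply max_lt
        · rw [Real.dist_eq]; exact hu1
        · rw [Real.dist_eq]; exact lt_of_le_of_lt hσtu hu1
      have := hδ' hdist
      rw [Real.dist_eq] at this
      have hbtt : b + t - t = b := by ring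
      rw [hbtt] at this
      rw [Real.norm_eq_abs]
      exact this.le
    calc ‖∫ σ in t..u, (V N R (b + u - σ) σ - V N R b t)‖
        ≤ ε' * |u - t| := intervalIntegral.norm_integral_le_of_norm_le_const hbound
      _ = ε' * ‖u - t‖ := by rw [Real.norm_eq_abs]
  -- combine
  have hcomb := hΦ.add hΨ
  rw [add_comm (V N R b t) (∫ σ in (0:ℝ)..t, Vc N R ((b + t) - σ) σ)]
  apply hcomb.congr_of_eventuallyEq
  have hmem : ∀ᶠ u in 𝓝 t, u ∈ ball t δ := ball_mem_nhds t hδ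
  filter_upwards [hmem] with u hu
  rw [mem_ball, Real.dist_eq] at hu
  have hu1 : |u - t| < rad b / 2 := lt_of_lt_of_le hu (min_le_left _ _)
  have hu2 : |u - t| < t/2 := lt_of_lt_of_le hu (min_le_right _ _)
  have h1 := integrable_V_shift N hR hb ht hu1 hu2
  have h2 : IntervalIntegrable (fun σ => V N R (b + u - σ) σ) volume t u := by
    apply ContinuousOn.intervalIntegrable
    intro σ hσ
    have hσl : t/2 < σ := by
      rcases le_total t u with h|h
      · have := (uIcc_of_le h ▸ hσ).1; linarith [abs_lt.mp hu2]
      · have := (uIcc_of_ge h ▸ hσ).1; linarith [abs_lt.mp hu2]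
    exact (contAt_comp1 (w := b + u) (contAt_V2 N R (ne_of_gt (by linarith)))).continuousWithinAt
  exact (intervalIntegral.integral_add_adjacent_intervals h1 h2).symm

lemma integrable_four (N : ℕ) {R b t : ℝ} (hR : 0 ≤ R) (hb : 0 < b) (ht : 0 < t) :
    IntervalIntegrable (fun σ => Vc N R ((b + t) - σ) σ) volume 0 t ∧
    IntervalIntegrable (fun σ => Vcc N R ((b + t) - σ) σ) volume 0 t ∧
    IntervalIntegrable (fun σ => VR N R ((b + t) - σ) σ) volume 0 t ∧
    IntervalIntegrable (fun σ => VRR N R ((b + t) - σ) σ) volume 0 t := by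
  obtain ⟨M, hM0, hM⟩ := master_bound N (R₀ := R) (b := b) (K := 2*b+t) hR hb (by positivity)
  have hreg : ∀ σ ∈ Ioc (0:ℝ) t, b/2 ≤ (b+t) - σ ∧ (b+t) - σ ≤ 2*b+t := by
    intro σ hσ
    exact ⟨by nlinarith [hσ.2], by nlinarith [hσ.1]⟩
  have he1 : R - b^2/8 ≤ R := by nlinarith [sq_nonneg b]
  have he2 : R ≤ R + 1 := le_add_of_nonneg_right zero_le_one
  refine ⟨?_, ?_, ?_, ?_⟩ <;> apply intervalIntegrable_of_bdd (M := M) ht.le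
  · exact fun σ hσ => contAt_comp1 (contAt_Vc2 N R (ne_of_gt hσ.1))
  · exact fun σ hσ => (hM he1 he2 (hreg σ hσ).1 (hreg σ hσ).2 hσ.1).2.1
  · exact fun σ hσ => contAt_comp1 (contAt_Vcc2 N R (ne_of_gt hσ.1))
  · exact fun σ hσ => (hM he1 he2 (hreg σ hσ).1 (hreg σ hσ).2 hσ.1).2.2.1
  · exact fun σ hσ => contAt_comp1 (contAt_VR2 N R (ne_of_gt hσ.1))
  · exact fun σ hσ => (hM he1 he2 (hreg σ hσ).1 (hreg σ hσ).2 hσ.1).2.2.2.1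
  · exact fun σ hσ => contAt_comp1 (contAt_VRR2 N R (ne_of_gt hσ.1))
  · exact fun σ hσ => (hM he1 he2 (hreg σ hσ).1 (hreg σ hσ).2 hσ.1).2.2.2.2.1

lemma integral_identity (N : ℕ) {R b t : ℝ} (hR : 0 ≤ R) (hb : 0 < b) (ht : 0 < t) :
    (∫ σ in (0:ℝ)..t, Vcc N R ((b + t) - σ) σ)
      + 2*(N:ℝ) * (∫ σ in (0:ℝ)..t, VR N R ((b + t) - σ) σ)
      + 4*R * (∫ σ in (0:ℝ)..t, VRR N R ((b + t) - σ) σ)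
    = (∫ σ in (0:ℝ)..t, Vc N R ((b + t) - σ) σ) + V N R b t := by
  obtain ⟨i1, i2, i3, i4⟩ := integrable_four N hR hb ht
  obtain ⟨M, hM0, hM⟩ := master_bound N (R₀ := R) (b := b) (K := 2*b+t) hR hb (by positivity)
  have i5 : IntervalIntegrable
      (fun σ => Vs N R ((b + t) - σ) σ - Vc N R ((b + t) - σ) σ) volume 0 t := by
    apply intervalIntegrable_of_bdd (M := 2*M) ht.le
    · intro σ hσ
      exact ContinuousAt.sub (contAt_comp1 (contAt_Vs2 N R (ne_of_gt hσ.1)))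
        (contAt_comp1 (contAt_Vc2 N R (ne_of_gt hσ.1)))
    · intro σ hσ
      have e3 : b/2 ≤ (b+t) - σ := by nlinarith [hσ.2]
      have e4 : (b+t) - σ ≤ 2*b+t := by nlinarith [hσ.1]
      have h1 := (hM (by nlinarith [sq_nonneg b]) (le_add_of_nonneg_right zero_le_one) e3 e4 hσ.1).2.2.2.2.2
      have h2 := (hM (by nlinarith [sq_nonneg b]) (le_add_of_nonneg_right zero_le_one) e3 e4 hσ.1).2.1
      calc |Vs N R ((b+t) - σ) σ - Vc N R ((b+t) - σ) σ|
          ≤ |Vs N R ((b+t) - σ) σ| + |Vc N R ((b+t) - σ) σ| := abs_sub _ _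
        _ ≤ 2*M := by linarith
  have hsplit : (∫ σ in (0:ℝ)..t, Vcc N R ((b + t) - σ) σ)
      + 2*(N:ℝ) * (∫ σ in (0:ℝ)..t, VR N R ((b + t) - σ) σ)
      + 4*R * (∫ σ in (0:ℝ)..t, VRR N R ((b + t) - σ) σ)
      = ∫ σ in (0:ℝ)..t, (Vcc N R ((b + t) - σ) σ + 2*(N:ℝ) * VR N R ((b + t) - σ) σ
          + 4*R * VRR N R ((b + t) - σ) σ) := by
    rw [intervalIntegral.integral_add (i2.add (i3.const_mul (2*(N:ℝ)))) (i4.const_mul (4*R)),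
      intervalIntegral.integral_add i2 (i3.const_mul (2*(N:ℝ))),
      intervalIntegral.integral_const_mul, intervalIntegral.integral_const_mul]
  rw [hsplit]
  have hcongr : ∫ σ in (0:ℝ)..t, (Vcc N R ((b + t) - σ) σ + 2*(N:ℝ) * VR N R ((b + t) - σ) σ
        + 4*R * VRR N R ((b + t) - σ) σ)
      = ∫ σ in (0:ℝ)..t, (Vc N R ((b + t) - σ) σ
          + (Vs N R ((b + t) - σ) σ - Vc N R ((b + t) - σ) σ)) := by
    apply intervalIntegral.integral_congr
    intro σ _
    simp only
    rw [heat_id]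
    ring
  rw [hcongr, intervalIntegral.integral_add i1 i5, ftc_key N hR hb ht]

lemma comp_apply_last (N : ℕ) (x y : Fin (N+1) → ℝ) (τ : ℝ) :
    (x - ystar N y + τ • eN N) (Fin.last N)
      = x (Fin.last N) + y (Fin.last N) + τ := by
  simp [ystar, eN, Pi.sub_apply, Pi.add_apply, Pi.smul_apply, smul_eq_mul]


lemma comp_apply_ne (N : ℕ) (x y : Fin (N+1) → ℝ) (τ : ℝ) {i : Fin (N+1)}
    (hi : i ≠ Fin.last N) :
    (x - ystar N y + τ • eN N) i = x i - y i := by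
  simp [ystar, eN, Pi.sub_apply, Pi.add_apply, Pi.smul_apply, smul_eq_mul,
    Function.update_of_ne hi, Pi.single_eq_of_ne hi]

lemma gauss_eq_PE (N : ℕ) (ξ : Fin (N+1) → ℝ) (s : ℝ) :
    gauss (N+1) ξ s
      = PE N (∑ i ∈ Finset.univ.erase (Fin.last N), (ξ i)^2) (ξ (Fin.last N)) s := by
  rw [gauss, PE]
  have hsum : (∑ i, (ξ i)^2)
      = (∑ i ∈ Finset.univ.erase (Fin.last N), (ξ i)^2) + (ξ (Fin.last N))^2 := by
    exact (Finset.sum_erase_add _ _ (Finset.mem_univ _)).symm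
  congr 1
  · norm_num
  · rw [hsum, neg_div]

lemma sum_update_sq (N : ℕ) (ξ : Fin (N+1) → ℝ) (u : ℝ) :
    ∑ i ∈ Finset.univ.erase (Fin.last N), ((Function.update ξ (Fin.last N) u) i)^2
      = ∑ i ∈ Finset.univ.erase (Fin.last N), (ξ i)^2 := by
  apply Finset.sum_congr rfl
  intro i hi
  rw [Function.update_of_ne (Finset.ne_of_mem_erase hi)]

lemma deriv_gauss_last (N : ℕ) (ξ : Fin (N+1) → ℝ) (s : ℝ) :
    deriv (fun u => gauss (N+1) (Function.update ξ (Fin.last N) u) s) (ξ (Fin.last N))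
      = V N (∑ i ∈ Finset.univ.erase (Fin.last N), (ξ i)^2) (ξ (Fin.last N)) s := by
  have hfun : (fun u => gauss (N+1) (Function.update ξ (Fin.last N) u) s)
      = fun u => PE N (∑ i ∈ Finset.univ.erase (Fin.last N), (ξ i)^2) u s := by
    funext u
    rw [gauss_eq_PE, sum_update_sq, Function.update_self]
  rw [hfun]
  rcases eq_or_ne s 0 with h|h
  · subst h
    have : (fun u => PE N (∑ i ∈ Finset.univ.erase (Fin.last N), (ξ i)^2) u (0:ℝ))
        = fun _ => (0:ℝ) := funext fun u => PE_zero _ _ _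
    rw [this, deriv_const, V_zero]
  · exact (hasDerivAt_PE_c N _ (ξ (Fin.last N)) h).deriv

lemma hker_eq (N : ℕ) (x y : Fin (N+1) → ℝ) (t : ℝ) :
    hker N x y t = -2 * ∫ σ in (0:ℝ)..t,
      V N (∑ i ∈ Finset.univ.erase (Fin.last N), (x i - y i)^2)
        (x (Fin.last N) + y (Fin.last N) + t - σ) σ := by
  rw [hker]
  congr 1
  have hpt : ∀ τ : ℝ,
      deriv (fun s => gauss (N + 1)
        (Function.update (x - ystar N y + τ • eN N) (Fin.last N) s) (t - τ))
        ((x - ystar N y + τ • eN N) (Fin.last N))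
      = (fun σ => V N (∑ i ∈ Finset.univ.erase (Fin.last N), (x i - y i)^2)
          (x (Fin.last N) + y (Fin.last N) + t - σ) σ) (t - τ) := by
    intro τ
    rw [deriv_gauss_last]
    simp only
    congr 1
    · apply Finset.sum_congr rfl
      intro i hi
      rw [comp_apply_ne N x y τ (Finset.ne_of_mem_erase hi)]
    · rw [comp_apply_last]
      ring
  have h2 := intervalIntegral.integral_congr (μ := volume) (a := (0:ℝ)) (b := t) (g := fun τ =>
      (fun σ => V N (∑ i ∈ Finset.univ.erase (Fin.last N), (x i - y i)^2)
          (x (Fin.last N) + y (Fin.last N) + t - σ) σ) (t - τ)) (fun τ _ => hpt τ)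
  have h3 := intervalIntegral.integral_comp_sub_left (a := (0:ℝ)) (b := t)
      (fun σ => V N (∑ i ∈ Finset.univ.erase (Fin.last N), (x i - y i)^2)
          (x (Fin.last N) + y (Fin.last N) + t - σ) σ) t
  rw [h2, h3]
  norm_num

lemma sum_update_last (N : ℕ) (x y : Fin (N+1) → ℝ) (u : ℝ) :
    ∑ i ∈ Finset.univ.erase (Fin.last N), ((Function.update x (Fin.last N) u) i - y i)^2
      = ∑ i ∈ Finset.univ.erase (Fin.last N), (x i - y i)^2 := by
  apply Finset.sum_congr rfl
  intro i hi
  rw [Function.update_of_ne (Finset.ne_of_mem_erase hi)]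

lemma sum_update_tang (N : ℕ) (x y : Fin (N+1) → ℝ) {j : Fin (N+1)} (hj : j ≠ Fin.last N)
    (u : ℝ) :
    ∑ i ∈ Finset.univ.erase (Fin.last N), ((Function.update x j u) i - y i)^2
      = (∑ i ∈ Finset.univ.erase (Fin.last N), (x i - y i)^2) - (x j - y j)^2 + (u - y j)^2 := by
  have hmem : j ∈ Finset.univ.erase (Fin.last N) := Finset.mem_erase.mpr ⟨hj, Finset.mem_univ _⟩
  have hpt : ∀ i, ((Function.update x j u) i - y i)^2
      = Function.update (fun i => (x i - y i)^2) j ((u - y j)^2) i := by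
    intro i
    rcases eq_or_ne i j with h|h
    · subst h; rw [Function.update_self, Function.update_self]
    · rw [Function.update_of_ne h, Function.update_of_ne h]
  rw [Finset.sum_congr rfl (fun i _ => hpt i), Finset.sum_update_of_mem hmem]
  have hsplit := Finset.sum_erase_add (Finset.univ.erase (Fin.last N))
    (fun i => (x i - y i)^2) hmem
  rw [Finset.sdiff_singleton_eq_erase]
  linarith [hsplit]

lemma sum_tang_eq (N : ℕ) (x y : Fin (N+1) → ℝ) :
    ∑ i : Fin N, (x i.castSucc - y i.castSucc)^2
      = ∑ i ∈ Finset.univ.erase (Fin.last N), (x i - y i)^2 := by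
  have h1 : ∑ i : Fin (N+1), (x i - y i)^2
      = ∑ i : Fin N, (x i.castSucc - y i.castSucc)^2 + (x (Fin.last N) - y (Fin.last N))^2 :=
    Fin.sum_univ_castSucc _
  have h2 := Finset.sum_erase_add Finset.univ (fun i => (x i - y i)^2)
      (Finset.mem_univ (Fin.last N))
  linarith

lemma last_term (N : ℕ) (x y : Fin (N+1) → ℝ) {t : ℝ}
    (hy : 0 ≤ y (Fin.last N)) (hx : 0 < x (Fin.last N)) (ht : 0 < t) :
    iteratedDeriv 2 (fun u => hker N (Function.update x (Fin.last N) u) y t) (x (Fin.last N))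
      = -2 * ∫ σ in (0:ℝ)..t, Vcc N (∑ i ∈ Finset.univ.erase (Fin.last N), (x i - y i)^2)
          (x (Fin.last N) + y (Fin.last N) + t - σ) σ := by
  set R := ∑ i ∈ Finset.univ.erase (Fin.last N), (x i - y i)^2 with hRdef
  set b := x (Fin.last N) + y (Fin.last N) with hbdef
  have hR : 0 ≤ R := Finset.sum_nonneg (fun i _ => sq_nonneg _)
  have hb : 0 < b := add_pos_of_pos_of_nonneg hx hy
  have hfeq : (fun u => hker N (Function.update x (Fin.last N) u) y t)
      = fun u => -2 * ∫ σ in (0:ℝ)..t, V N R (u + y (Fin.last N) + t - σ) σ := by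
    funext u
    rw [hker_eq]
    simp only [sum_update_last, Function.update_self, hRdef]
  rw [hfeq, iteratedDeriv_succ, iteratedDeriv_one]
  have hderiv1 : ∀ u ∈ ball (x (Fin.last N)) (rad b / 2),
      HasDerivAt (fun u => -2 * ∫ σ in (0:ℝ)..t, V N R (u + y (Fin.last N) + t - σ) σ)
        (-2 * ∫ σ in (0:ℝ)..t, Vc N R (u + y (Fin.last N) + t - σ) σ) u := by
    intro u hu
    rw [mem_ball, Real.dist_eq] at hu
    have hw : |(u + y (Fin.last N) + t) - (b + t)| < rad b / 2 := by
      have he : (u + y (Fin.last N) + t) - (b + t) = u - x (Fin.last N) := by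
        rw [hbdef]; ring
      rw [he]; exact hu
    have h := ((hasDerivAt_L_w N hR hb ht (w₁ := u + y (Fin.last N) + t) hw).comp u
      (((hasDerivAt_id u).add_const (y (Fin.last N))).add_const t)).const_mul (-2)
    simpa [Function.comp] using h
  have hev : deriv (fun u => -2 * ∫ σ in (0:ℝ)..t, V N R (u + y (Fin.last N) + t - σ) σ)
      =ᶠ[𝓝 (x (Fin.last N))]
        (fun u => -2 * ∫ σ in (0:ℝ)..t, Vc N R (u + y (Fin.last N) + t - σ) σ) := by
    filter_upwards [ball_mem_nhds _ (half_pos (rad_pos hb))] with u hu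
    exact (hderiv1 u hu).deriv
  rw [hev.deriv_eq]
  have hL2 : HasDerivAt (fun w => ∫ σ in (0:ℝ)..t, Vc N R (w - σ) σ)
      (∫ σ in (0:ℝ)..t, Vcc N R ((b + t) - σ) σ) (x (Fin.last N) + y (Fin.last N) + t) := by
    rw [show x (Fin.last N) + y (Fin.last N) + t = b + t from (by rw [hbdef])]
    exact hasDerivAt_L_ww N hR hb ht
  have h4 : HasDerivAt (fun u => -2 * ∫ σ in (0:ℝ)..t, Vc N R (u + y (Fin.last N) + t - σ) σ)
      (-2 * ∫ σ in (0:ℝ)..t, Vcc N R ((b + t) - σ) σ) (x (Fin.last N)) := by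
    have h := (hL2.comp (x (Fin.last N))
      (((hasDerivAt_id (x (Fin.last N))).add_const (y (Fin.last N))).add_const t)).const_mul (-2)
    simpa [Function.comp] using h
  exact h4.deriv

lemma tang_term (N : ℕ) (x y : Fin (N+1) → ℝ) {t : ℝ}
    (hy : 0 ≤ y (Fin.last N)) (hx : 0 < x (Fin.last N)) (ht : 0 < t)
    {j : Fin (N+1)} (hj : j ≠ Fin.last N) :
    iteratedDeriv 2 (fun u => hker N (Function.update x j u) y t) (x j)
      = -2 * (4*(x j - y j)^2 * (∫ σ in (0:ℝ)..t,
            VRR N (∑ i ∈ Finset.univ.erase (Fin.last N), (x i - y i)^2)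
              (x (Fin.last N) + y (Fin.last N) + t - σ) σ)
          + 2 * (∫ σ in (0:ℝ)..t,
            VR N (∑ i ∈ Finset.univ.erase (Fin.last N), (x i - y i)^2)
              (x (Fin.last N) + y (Fin.last N) + t - σ) σ)) := by
  set R := ∑ i ∈ Finset.univ.erase (Fin.last N), (x i - y i)^2 with hRdef
  set b := x (Fin.last N) + y (Fin.last N) with hbdef
  have hR : 0 ≤ R := Finset.sum_nonneg (fun i _ => sq_nonneg _)
  have hb : 0 < b := add_pos_of_pos_of_nonneg hx hy
  have hρ := rad_pos hb
  have hfeq : (fun u => hker N (Function.update x j u) y t)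
      = fun u => -2 * ∫ σ in (0:ℝ)..t, V N (R - (x j - y j)^2 + (u - y j)^2) ((b + t) - σ) σ := by
    funext u
    rw [hker_eq]
    simp only [sum_update_tang N x y hj, Function.update_of_ne (Ne.symm hj), hRdef, hbdef]
  rw [hfeq, iteratedDeriv_succ, iteratedDeriv_one]
  set δj : ℝ := min 1 (rad b / (4 * (1 + 2*|x j - y j|))) with hδdef
  have hδpos : 0 < δj := by
    rw [hδdef]
    have : (0:ℝ) < rad b / (4 * (1 + 2*|x j - y j|)) := by positivity
    exact lt_min one_pos this
  have hδ1 : δj ≤ 1 := min_le_left _ _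
  have hδ2 : δj * (4 * (1 + 2*|x j - y j|)) ≤ rad b := by
    have h := min_le_right (1:ℝ) (rad b / (4 * (1 + 2*|x j - y j|)))
    rw [← hδdef] at h
    have hq : (0:ℝ) < 4 * (1 + 2*|x j - y j|) := by positivity
    calc δj * (4 * (1 + 2*|x j - y j|))
        ≤ (rad b / (4 * (1 + 2*|x j - y j|))) * (4 * (1 + 2*|x j - y j|)) := by
          exact mul_le_mul_of_nonneg_right h hq.le
      _ = rad b := div_mul_cancel₀ _ (ne_of_gt hq)
  have hRcond : ∀ u ∈ ball (x j) δj, |(R - (x j - y j)^2 + (u - y j)^2) - R| < rad b / 2 := by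
    intro u hu
    rw [mem_ball, Real.dist_eq] at hu
    have he : (R - (x j - y j)^2 + (u - y j)^2) - R = (u - x j) * (u + x j - 2*y j) := by ring
    rw [he, abs_mul]
    have h2 : |u + x j - 2*y j| ≤ |u - x j| + 2*|x j - y j| := by
      calc |u + x j - 2*y j| = |(u - x j) + 2*(x j - y j)| := by ring_nf
        _ ≤ |u - x j| + |2*(x j - y j)| := abs_add_le _ _
        _ = |u - x j| + 2*|x j - y j| := by rw [abs_mul]; norm_num
    have key1 : |u - x j| * |u + x j - 2*y j| ≤ |u - x j| * (|u - x j| + 2*|x j - y j|) :=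
      mul_le_mul_of_nonneg_left h2 (abs_nonneg _)
    nlinarith [abs_nonneg (u - x j), abs_nonneg (x j - y j), hρ, hδpos, hδ1, hδ2, key1, hu]
  have hderiv1 : ∀ u ∈ ball (x j) δj,
      HasDerivAt (fun u => -2 * ∫ σ in (0:ℝ)..t, V N (R - (x j - y j)^2 + (u - y j)^2) ((b + t) - σ) σ)
        (-2 * ((∫ σ in (0:ℝ)..t, VR N (R - (x j - y j)^2 + (u - y j)^2) ((b + t) - σ) σ)
          * (2*(u - y j)))) u := by
    intro u hu
    have hLR := hasDerivAt_L_R N hR hb ht (R₁ := R - (x j - y j)^2 + (u - y j)^2) (hRcond u hu)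
    have hφ := (((hasDerivAt_id u).sub_const (y j)).pow 2).const_add (R - (x j - y j)^2)
    have h := (hLR.comp u hφ).const_mul (-2)
    simpa [Function.comp] using h
  have hev : deriv (fun u => -2 * ∫ σ in (0:ℝ)..t, V N (R - (x j - y j)^2 + (u - y j)^2) ((b + t) - σ) σ)
      =ᶠ[𝓝 (x j)] (fun u => -2 * ((∫ σ in (0:ℝ)..t, VR N (R - (x j - y j)^2 + (u - y j)^2) ((b + t) - σ) σ)
          * (2*(u - y j)))) := by
    filter_upwards [ball_mem_nhds _ hδpos] with u hu
    exact (hderiv1 u hu).deriv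
  rw [hev.deriv_eq]
  have hL' : HasDerivAt (fun r => ∫ σ in (0:ℝ)..t, VR N r ((b + t) - σ) σ)
      (∫ σ in (0:ℝ)..t, VRR N R ((b + t) - σ) σ) (R - (x j - y j)^2 + (x j - y j)^2) := by
    rw [show R - (x j - y j)^2 + (x j - y j)^2 = R from by ring]
    exact hasDerivAt_L_RR N hR hb ht
  have hφx := (((hasDerivAt_id (x j)).sub_const (y j)).pow 2).const_add (R - (x j - y j)^2)
  have hG : HasDerivAt (fun u => ∫ σ in (0:ℝ)..t, VR N (R - (x j - y j)^2 + (u - y j)^2) ((b + t) - σ) σ)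
      ((∫ σ in (0:ℝ)..t, VRR N R ((b + t) - σ) σ) * (2*(x j - y j))) (x j) := by
    have h := hL'.comp (x j) hφx
    simpa [Function.comp_def] using h
  have hH : HasDerivAt (fun u : ℝ => 2*(u - y j)) 2 (x j) := by
    simpa using ((hasDerivAt_id (x j)).sub_const (y j)).const_mul 2
  have htot : HasDerivAt (fun u => -2 * ((∫ σ in (0:ℝ)..t, VR N (R - (x j - y j)^2 + (u - y j)^2) ((b + t) - σ) σ)
            * (2*(u - y j)))) _ (x j) := (hG.mul hH).const_mul (-2)
  rw [htot.deriv]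
  have hval : R - (x j - y j)^2 + (x j - y j)^2 = R := by ring
  simp only [hval]
  ring

/-- For fixed `y` in the closed upper half-space, `H(·,y,·)` solves the heat equation
`∂_t H = Δ_x H` in `Ω × (0,∞)` (dimension is `N+1 ≥ 1`). -/
theorem stmt_6 (N : ℕ) (y : Fin (N + 1) → ℝ) (hy : 0 ≤ y (Fin.last N))
    (x : Fin (N + 1) → ℝ) (hx : 0 < x (Fin.last N)) (t : ℝ) (ht : 0 < t) :
    deriv (fun τ => hker N x y τ) t
      = ∑ i, iteratedDeriv 2 (fun s => hker N (Function.update x i s) y t) (x i) := by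
  have hR : 0 ≤ ∑ i ∈ Finset.univ.erase (Fin.last N), (x i - y i)^2 :=
    Finset.sum_nonneg (fun i _ => sq_nonneg _)
  have hb : 0 < x (Fin.last N) + y (Fin.last N) := add_pos_of_pos_of_nonneg hx hy
  have hL : (fun τ => hker N x y τ) = fun u => -2 * ∫ σ in (0:ℝ)..u,
      V N (∑ i ∈ Finset.univ.erase (Fin.last N), (x i - y i)^2)
        (x (Fin.last N) + y (Fin.last N) + u - σ) σ :=
    funext fun u => hker_eq N x y u
  rw [hL]
  have hD := (hasDerivAt_D N hR hb ht).const_mul (-2)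
  rw [hD.deriv]
  rw [Fin.sum_univ_castSucc]
  rw [last_term N x y hy hx ht]
  have hsum : ∑ i : Fin N,
      iteratedDeriv 2 (fun s => hker N (Function.update x i.castSucc s) y t) (x i.castSucc)
      = ∑ i : Fin N, ((-2) * (4*(x i.castSucc - y i.castSucc)^2 * (∫ σ in (0:ℝ)..t,
            VRR N (∑ i ∈ Finset.univ.erase (Fin.last N), (x i - y i)^2)
              (x (Fin.last N) + y (Fin.last N) + t - σ) σ)
          + 2 * (∫ σ in (0:ℝ)..t,
            VR N (∑ i ∈ Finset.univ.erase (Fin.last N), (x i - y i)^2)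
              (x (Fin.last N) + y (Fin.last N) + t - σ) σ))) :=
    Finset.sum_congr rfl (fun i _ => tang_term N x y hy hx ht (Fin.castSucc_lt_last i).ne)
  rw [hsum]
  have hexp : ∑ i : Fin N, ((-2 : ℝ) * (4*(x i.castSucc - y i.castSucc)^2 * (∫ σ in (0:ℝ)..t,
            VRR N (∑ i ∈ Finset.univ.erase (Fin.last N), (x i - y i)^2)
              (x (Fin.last N) + y (Fin.last N) + t - σ) σ)
          + 2 * (∫ σ in (0:ℝ)..t,
            VR N (∑ i ∈ Finset.univ.erase (Fin.last N), (x i - y i)^2)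
              (x (Fin.last N) + y (Fin.last N) + t - σ) σ)))
      = (-8 * (∫ σ in (0:ℝ)..t,
            VRR N (∑ i ∈ Finset.univ.erase (Fin.last N), (x i - y i)^2)
              (x (Fin.last N) + y (Fin.last N) + t - σ) σ))
          * (∑ i : Fin N, (x i.castSucc - y i.castSucc)^2)
        + (N:ℝ) * (-4 * (∫ σ in (0:ℝ)..t,
            VR N (∑ i ∈ Finset.univ.erase (Fin.last N), (x i - y i)^2)
              (x (Fin.last N) + y (Fin.last N) + t - σ) σ)) := by
    rw [Finset.sum_congr rfl (fun i (_ : i ∈ Finset.univ) => (by ring :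
      (-2 : ℝ) * (4*(x i.castSucc - y i.castSucc)^2 * (∫ σ in (0:ℝ)..t,
            VRR N (∑ i ∈ Finset.univ.erase (Fin.last N), (x i - y i)^2)
              (x (Fin.last N) + y (Fin.last N) + t - σ) σ)
          + 2 * (∫ σ in (0:ℝ)..t,
            VR N (∑ i ∈ Finset.univ.erase (Fin.last N), (x i - y i)^2)
              (x (Fin.last N) + y (Fin.last N) + t - σ) σ))
      = (-8 * (∫ σ in (0:ℝ)..t,
            VRR N (∑ i ∈ Finset.univ.erase (Fin.last N), (x i - y i)^2)
              (x (Fin.last N) + y (Fin.last N) + t - σ) σ))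
          * (x i.castSucc - y i.castSucc)^2
        + (-4 * (∫ σ in (0:ℝ)..t,
            VR N (∑ i ∈ Finset.univ.erase (Fin.last N), (x i - y i)^2)
              (x (Fin.last N) + y (Fin.last N) + t - σ) σ))))]
    rw [Finset.sum_add_distrib, ← Finset.mul_sum, Finset.sum_const, Finset.card_univ,
      Fintype.card_fin, nsmul_eq_mul]
  rw [hexp, sum_tang_eq N x y]
  have hid := integral_identity N hR hb ht
  linear_combination (2 : ℝ) * hid
end

section
/- Suppose |x−y*|² ≥ 2(N+2)t. Then H(x,y,t) ≤ 2 Γ_N(x−y*,t)(1 − e^{-(2(x_N+y_N)+t)/4}); in particular H(x,y,t) ≤ C(x_N+y_N+t)Γ_N(x−y*,t) when x_N+y_N+t < 1, and H(x,y,t) ≤ 2Γ_N(x−y*,t) always. -/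
open Real MeasureTheory Set

lemma sum_update_sq_s11 {n : ℕ} (v : Fin n → ℝ) (i : Fin n) (s : ℝ) :
    ∑ j, Function.update v i s j ^ 2
      = s ^ 2 + ∑ j ∈ Finset.univ.erase i, v j ^ 2 := by
  have h : (fun j => Function.update v i s j ^ 2)
      = Function.update (fun j => v j ^ 2) i (s ^ 2) := by
    funext j
    rcases eq_or_ne j i with rfl | hj
    · simp
    · simp [Function.update_of_ne hj]
  rw [h, Finset.sum_update_of_mem (Finset.mem_univ i), Finset.sdiff_singleton_eq_erase]

lemma gauss_update {n : ℕ} (v : Fin n → ℝ) (i : Fin n) (s t : ℝ) :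
    gauss n (Function.update v i s) t
      = (4*π*t) ^ (-(n:ℝ)/2)
          * Real.exp (-(s^2 + ∑ j ∈ Finset.univ.erase i, v j ^ 2) / (4*t)) := by
  rw [gauss, sum_update_sq_s11]

lemma gauss_zero {n : ℕ} (hn : n ≠ 0) (u : Fin n → ℝ) : gauss n u 0 = 0 := by
  rw [gauss, mul_zero, Real.zero_rpow, zero_mul]
  simp only [ne_eq, div_eq_zero_iff, neg_eq_zero, Nat.cast_eq_zero]
  push_neg
  exact ⟨hn, by norm_num⟩

lemma deriv_gauss_at {n : ℕ} (hn : n ≠ 0) (v : Fin n → ℝ) (i : Fin n) (t' : ℝ) (s : ℝ) :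
    deriv (fun s => gauss n (Function.update v i s) t') s
      = -(s/(2*t')) * gauss n (Function.update v i s) t' := by
  rcases eq_or_ne t' 0 with rfl | ht
  · have h : (fun s => gauss n (Function.update v i s) 0) = fun _ => (0:ℝ) := by
      funext s; exact gauss_zero hn _
    rw [h, deriv_const, gauss_zero hn]
    ring
  · set K := ∑ j ∈ Finset.univ.erase i, v j ^ 2 with hK
    have h1 : HasDerivAt (fun s : ℝ => -(s^2 + K) / (4*t')) (-(2*s)/(4*t')) s := by
      have := ((hasDerivAt_pow 2 s).add_const K).neg.div_const (4*t')
      simpa using this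
    have h2 := (h1.exp).const_mul ((4*π*t') ^ (-(n:ℝ)/2))
    have h3 : HasDerivAt (fun s => gauss n (Function.update v i s) t')
        (-(s/(2*t')) * gauss n (Function.update v i s) t') s := by
      simp only [gauss_update, ← hK]
      refine h2.congr_deriv ?_
      field_simp
      ring
    exact h3.deriv

lemma mono_core (n : ℕ) (R s₁ s₂ : ℝ) (hs₁ : 0 < s₁) (h12 : s₁ ≤ s₂)
    (hR : 2*((n:ℝ)+2)*s₂ ≤ R) :
    (1/s₁) * ((4*π*s₁) ^ (-(n:ℝ)/2) * Real.exp (-R/(4*s₁)))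
      ≤ (1/s₂) * ((4*π*s₂) ^ (-(n:ℝ)/2) * Real.exp (-R/(4*s₂))) := by
  have hs₂ : 0 < s₂ := hs₁.trans_le h12
  have h4π : (0:ℝ) < 4*π := by positivity
  have key : ∀ s : ℝ, 0 < s →
      (1/s) * ((4*π*s) ^ (-(n:ℝ)/2) * Real.exp (-R/(4*s)))
        = Real.exp ((-(n:ℝ)/2) * Real.log (4*π) + (-(n:ℝ)/2 - 1) * Real.log s - R/(4*s)) := by
    intro s hs
    have e1 : (4*π*s) ^ (-(n:ℝ)/2)
        = Real.exp ((-(n:ℝ)/2) * Real.log (4*π)) * Real.exp ((-(n:ℝ)/2) * Real.log s) := by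
      rw [← Real.exp_add, ← mul_add, ← Real.log_mul (ne_of_gt h4π) (ne_of_gt hs),
        Real.rpow_def_of_pos (by positivity), mul_comm]
    have e2 : 1/s = Real.exp (-Real.log s) := by
      rw [Real.exp_neg, Real.exp_log hs, one_div]
    rw [e1, e2, sub_eq_add_neg]
    simp only [← Real.exp_add]
    congr 1
    ring
  rw [key s₁ hs₁, key s₂ hs₂, Real.exp_le_exp]
  have hlog : Real.log s₂ - Real.log s₁ ≤ s₂/s₁ - 1 := by
    rw [← Real.log_div (ne_of_gt hs₂) (ne_of_gt hs₁)]
    exact Real.log_le_sub_one_of_pos (div_pos hs₂ hs₁)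
  have hp : (0:ℝ) ≤ (n:ℝ)/2 + 1 := by positivity
  have h1 : ((n:ℝ)/2 + 1) * (Real.log s₂ - Real.log s₁) ≤ ((n:ℝ)/2+1) * (s₂/s₁ - 1) :=
    mul_le_mul_of_nonneg_left hlog hp
  have h2 : ((n:ℝ)/2+1) * (s₂/s₁ - 1) ≤ R/(4*s₁) - R/(4*s₂) := by
    have e1 : s₂/s₁ - 1 = (s₂ - s₁)/s₁ := by field_simp
    have e2 : R/(4*s₁) - R/(4*s₂) = R*(s₂-s₁)/(4*(s₁*s₂)) := by
      field_simp
    rw [e1, e2, ← mul_div_assoc, div_le_div_iff₀ hs₁ (by positivity)]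
    nlinarith [mul_le_mul_of_nonneg_right hR
        (mul_nonneg (sub_nonneg.2 h12) hs₁.le), hs₁.le, hs₂.le]
  linarith

set_option maxHeartbeats 1000000 in
/-- If `|x-y*|² ≥ 2(N+2)t` then `H(x,y,t) ≤ 2Γ_N(x-y*,t)(1 - e^{-(2(x_N+y_N)+t)/4})`;
in particular `H ≤ C(x_N+y_N+t)Γ_N(x-y*,t)` when `x_N+y_N+t < 1`, and
`H ≤ 2Γ_N(x-y*,t)` always (dimension is `N+1 ≥ 1`). -/
theorem stmt_11 (N : ℕ) :
    ∃ C > (0 : ℝ), ∀ (x y : Fin (N + 1) → ℝ) (t : ℝ),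
      0 ≤ x (Fin.last N) → 0 ≤ y (Fin.last N) → 0 < t →
      2 * ((N : ℝ) + 1 + 2) * t ≤ (∑ i, (x i - ystar N y i) ^ 2) →
      (hker N x y t
          ≤ 2 * gauss (N + 1) (x - ystar N y) t
              * (1 - Real.exp (-(2 * (x (Fin.last N) + y (Fin.last N)) + t) / 4))) ∧
        (x (Fin.last N) + y (Fin.last N) + t < 1 →
          hker N x y t
            ≤ C * (x (Fin.last N) + y (Fin.last N) + t) * gauss (N + 1) (x - ystar N y) t) ∧
        hker N x y t ≤ 2 * gauss (N + 1) (x - ystar N y) t := by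
  refine ⟨1, one_pos, fun x y t hx hy ht hyp => ?_⟩
  set i := Fin.last N with hi
  set vb := x - ystar N y with hvb
  set a := x i + y i with ha
  have ha0 : 0 ≤ a := add_nonneg hx hy
  have hvbi : vb i = a := by
    simp [hvb, ystar, ha, sub_neg_eq_add, hi]
  set K := ∑ j ∈ Finset.univ.erase i, vb j ^ 2 with hK
  have hK0 : 0 ≤ K := Finset.sum_nonneg fun j _ => sq_nonneg _
  have hsum : ∑ j, vb j ^ 2 = a ^ 2 + K := by
    rw [← sum_update_sq_s11 vb i a, ← hvbi, Function.update_eq_self]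
  have hyp' : 2 * (((N:ℕ)+1 : ℕ) + 2 : ℝ) * t ≤ a ^ 2 + K := by
    rw [← hsum]
    push_cast
    exact hyp
  have hz : ∀ τ : ℝ, x - ystar N y + τ • eN N = Function.update vb i (a + τ) := by
    intro τ
    funext j
    rcases eq_or_ne j i with rfl | hj
    · simp [eN, ← hvb, hi, hi ▸ hvbi]
    · simp [eN, ← hvb, Function.update_of_ne hj, Pi.single_eq_of_ne (hi ▸ hj)]
  set P := (4*π*t) ^ (-(((N:ℕ)+1 : ℕ) : ℝ)/2) with hP
  have hP0 : 0 ≤ P := Real.rpow_nonneg (by positivity) _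
  have hDg : ∀ τ : ℝ,
      deriv (fun s => gauss (N + 1)
          (Function.update (x - ystar N y + τ • eN N) i s) (t - τ))
        ((x - ystar N y + τ • eN N) i)
      = -((a+τ)/2 * (1/(t-τ))) * ((4*π*(t-τ)) ^ (-(((N:ℕ)+1 : ℕ) : ℝ)/2)
          * Real.exp (-((a+τ)^2 + K)/(4*(t-τ)))) := by
    intro τ
    rw [hz τ, deriv_gauss_at (n := N+1) (Nat.succ_ne_zero N), Function.update_self,
      Function.update_idem, gauss_update, ← hK,
      show (a+τ)/(2*(t-τ)) = (a+τ)/2 * (1/(t-τ)) by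
        rw [div_mul_eq_div_div, div_eq_mul_one_div]]
  clear_value vb a K P
  set g : ℝ → ℝ := fun τ =>
    -((a+τ)/2 * (1/(t-τ))) * ((4*π*(t-τ)) ^ (-(((N:ℕ)+1 : ℕ) : ℝ)/2)
      * Real.exp (-((a+τ)^2 + K)/(4*(t-τ)))) with hg
  set f : ℝ → ℝ := fun τ =>
    (a+τ)/2 * (1/t * (P * Real.exp (-((a+τ)^2 + K)/(4*t)))) with hf
  clear_value g f
  have hker_eq : hker N x y t = -2 * ∫ τ in (0:ℝ)..t, g τ := by
    rw [hker]
    congr 1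
    refine intervalIntegral.integral_congr fun τ _ => ?_
    rw [hDg τ, hg]
  -- pointwise facts
  have hfnn : ∀ τ : ℝ, 0 ≤ τ → 0 ≤ f τ := by
    intro τ hτ
    simp only [hf]
    exact mul_nonneg (div_nonneg (by linarith) (by norm_num))
      (mul_nonneg (by positivity) (mul_nonneg hP0 (Real.exp_pos _).le))
  have hgf : ∀ τ ∈ Icc (0:ℝ) t, -g τ ≤ f τ := by
    intro τ hτ
    obtain ⟨hτ0, hτt⟩ := hτ
    rcases eq_or_lt_of_le hτt with rfl | hlt
    · have h0 : (1:ℝ)/(τ-τ) = 0 := by simp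
      simp only [hg, h0]
      simpa using hfnn τ hτ0
    · have hs₁ : 0 < t - τ := sub_pos.2 hlt
      have hRτ : 2*((((N:ℕ)+1 : ℕ):ℝ)+2)*t ≤ (a+τ)^2 + K := by
        nlinarith [hyp', ha0, hτ0]
      have hm := mono_core ((N:ℕ)+1) ((a+τ)^2 + K) (t-τ) t hs₁ (by linarith) hRτ
      have h2 := mul_le_mul_of_nonneg_left hm (by positivity : (0:ℝ) ≤ (a+τ)/2)
      calc -g τ = ((a+τ)/2) * ((1/(t-τ)) * ((4*π*(t-τ)) ^ (-(((N:ℕ)+1 : ℕ) : ℝ)/2)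
            * Real.exp (-((a+τ)^2 + K)/(4*(t-τ))))) := by simp only [hg]; ring
        _ ≤ ((a+τ)/2) * ((1/t) * ((4*π*t) ^ (-(((N:ℕ)+1 : ℕ) : ℝ)/2)
            * Real.exp (-((a+τ)^2 + K)/(4*t)))) := h2
        _ = f τ := by simp only [hf, hP]
  have hgle : ∀ τ ∈ Icc (0:ℝ) t, g τ ≤ 0 := by
    intro τ hτ
    obtain ⟨hτ0, hτt⟩ := hτ
    simp only [hg]
    have h1 : 0 ≤ (a+τ)/2 * (1/(t-τ)) :=
      mul_nonneg (by linarith) (one_div_nonneg.2 (by linarith))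
    have h2 : 0 ≤ (4*π*(t-τ)) ^ (-(((N:ℕ)+1 : ℕ) : ℝ)/2) :=
      Real.rpow_nonneg (by nlinarith [Real.pi_pos]) _
    have h3 : 0 ≤ Real.exp (-((a+τ)^2 + K)/(4*(t-τ))) := (Real.exp_pos _).le
    rw [neg_mul]
    exact neg_nonpos.2 (mul_nonneg h1 (mul_nonneg h2 h3))
  -- integrability
  have hf_cont : Continuous f := by simp only [hf]; fun_prop
  have hf_int : IntervalIntegrable f volume 0 t := hf_cont.intervalIntegrable 0 t
  have hg_meas : Measurable g := by simp only [hg]; fun_prop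
  have hg_int : IntervalIntegrable g volume 0 t := by
    rw [intervalIntegrable_iff_integrableOn_Ioc_of_le ht.le]
    apply MeasureTheory.Integrable.mono
      ((intervalIntegrable_iff_integrableOn_Ioc_of_le ht.le).1 hf_int)
      hg_meas.aestronglyMeasurable.restrict
    rw [ae_restrict_iff' measurableSet_Ioc]
    refine Filter.Eventually.of_forall fun τ hτ => ?_
    have hτ' : τ ∈ Icc (0:ℝ) t := ⟨hτ.1.le, hτ.2⟩
    rw [Real.norm_eq_abs, Real.norm_eq_abs, abs_of_nonpos (hgle τ hτ'),
      abs_of_nonneg (hfnn τ hτ'.1)]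
    exact hgf τ hτ'
  -- main comparison
  have hcomp : hker N x y t ≤ ∫ τ in (0:ℝ)..t, 2 * f τ := by
    rw [hker_eq, ← intervalIntegral.integral_const_mul]
    apply intervalIntegral.integral_mono_on ht.le (hg_int.const_mul (-2))
      (hf_int.const_mul 2)
    intro τ hτ
    have := hgf τ hτ
    linarith
  -- exact evaluation
  have heval : ∫ τ in (0:ℝ)..t, 2 * f τ
      = 2 * (P * Real.exp (-K/(4*t))) * (Real.exp (-a^2/(4*t)) - Real.exp (-(a+t)^2/(4*t))) := by
    have hint : IntervalIntegrable (fun τ => 2 * f τ) volume 0 t :=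
      hf_int.const_mul 2
    have hder : ∀ τ ∈ Set.uIcc (0:ℝ) t,
        HasDerivAt (fun τ => -(2 * (P * Real.exp (-K/(4*t)))) * Real.exp (-(a+τ)^2/(4*t)))
          (2 * f τ) τ := by
      intro τ _
      have h1 : HasDerivAt (fun τ : ℝ => -(a+τ)^2/(4*t)) (-(2*(a+τ))/(4*t)) τ := by
        have h0 : HasDerivAt (fun τ : ℝ => a + τ) 1 τ := (hasDerivAt_id τ).const_add a
        have := ((h0.pow 2).neg).div_const (4*t)
        simpa using this
      have h2 := (h1.exp).const_mul (-(2 * (P * Real.exp (-K/(4*t)))))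
      refine h2.congr_deriv ?_
      simp only [hf]
      rw [show -((a+τ)^2 + K)/(4*t) = -K/(4*t) + -(a+τ)^2/(4*t) by ring, Real.exp_add]
      field_simp
      ring
    rw [intervalIntegral.integral_eq_sub_of_hasDerivAt hder hint]
    simp only [add_zero]
    ring
  have hgauss : gauss (N+1) vb t = P * Real.exp (-(a^2+K)/(4*t)) := by
    rw [gauss, hsum, hP]
  -- the first bound
  have e3 : Real.exp (-K/(4*t)) * Real.exp (-(a+t)^2/(4*t))
      = Real.exp (-(a^2+K)/(4*t)) * Real.exp (-(2*a+t)/4) := by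
    rw [← Real.exp_add, ← Real.exp_add]
    congr 1
    field_simp
    ring
  have e4 : Real.exp (-K/(4*t)) * Real.exp (-a^2/(4*t)) = Real.exp (-(a^2+K)/(4*t)) := by
    rw [← Real.exp_add]
    congr 1
    ring
  have hrhs : (2:ℝ) * (P * Real.exp (-K/(4*t)))
        * (Real.exp (-a^2/(4*t)) - Real.exp (-(a+t)^2/(4*t)))
      = 2 * gauss (N+1) vb t * (1 - Real.exp (-(2*a+t)/4)) := by
    rw [hgauss]
    linear_combination (2*P) * e4 - (2*P) * e3
  have main : hker N x y t ≤ 2 * gauss (N+1) vb t * (1 - Real.exp (-(2*a+t)/4)) := by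
    rw [← hrhs, ← heval]
    exact hcomp
  have hΓ : 0 ≤ gauss (N+1) vb t := by
    rw [hgauss]
    exact mul_nonneg hP0 (Real.exp_pos _).le
  have hexp0 : 0 ≤ Real.exp (-(2*a+t)/4) := (Real.exp_pos _).le
  have hexp1 : 1 - Real.exp (-(2*a+t)/4) ≤ (2*a+t)/4 := by
    have := Real.add_one_le_exp (-(2*a+t)/4)
    linarith
  refine ⟨main, fun _ => ?_, ?_⟩
  · calc hker N x y t ≤ 2 * gauss (N+1) vb t * (1 - Real.exp (-(2*a+t)/4)) := main
      _ ≤ 2 * gauss (N+1) vb t * ((2*a+t)/4) := by nlinarith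
      _ ≤ 1 * (a + t) * gauss (N+1) vb t := by nlinarith [ht.le]
  · calc hker N x y t ≤ 2 * gauss (N+1) vb t * (1 - Real.exp (-(2*a+t)/4)) := main
      _ ≤ 2 * gauss (N+1) vb t := by nlinarith
end

section
/- Let p > 1 and λ > 0. If Z : [0,∞) → (0,∞) is C¹ and satisfies Z'(t) ≥ −λZ(t) + Z(t)^p for all t > 0, then Z(0)^{p−1} ≤ 2λ. -/
open Real Set

/-- ODE lemma: if `Z : [0,∞) → (0,∞)` is `C¹` and `Z' ≥ -λZ + Z^p` for `t > 0`
(with `p > 1`, `λ > 0`), then `Z(0)^{p-1} ≤ 2λ`. -/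
theorem stmt_17 (p lam : ℝ) (hp : 1 < p) (hlam : 0 < lam) (Z Z' : ℝ → ℝ)
    (hpos : ∀ t : ℝ, 0 ≤ t → 0 < Z t)
    (hderiv : ∀ t : ℝ, 0 ≤ t → HasDerivAt Z (Z' t) t)
    (hcont : ContinuousOn Z' (Set.Ici 0))
    (hineq : ∀ t : ℝ, 0 < t → Z' t ≥ -lam * Z t + Z t ^ p) :
    Z 0 ^ (p - 1) ≤ 2 * lam := by
  by_contra hcon
  push_neg at hcon
  have hp1 : (0:ℝ) < p - 1 := by linarith
  -- inequality also at t = 0, by continuity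
  have hineq0 : ∀ t : ℝ, 0 ≤ t → Z' t ≥ -lam * Z t + Z t ^ p := by
    intro t ht
    rcases ht.lt_or_eq with h' | h'
    · exact hineq t h'
    · subst h'
      have hZ'cont : Filter.Tendsto Z' (nhdsWithin 0 (Ioi 0)) (nhds (Z' 0)) :=
        ((hcont 0 (mem_Ici.2 le_rfl)).tendsto).mono_left
          (nhdsWithin_mono 0 Ioi_subset_Ici_self)
      have hZc : ContinuousAt Z 0 := (hderiv 0 le_rfl).continuousAt
      have hrhs : Filter.Tendsto (fun t => -lam * Z t + Z t ^ p)
          (nhdsWithin 0 (Ioi 0)) (nhds (-lam * Z 0 + Z 0 ^ p)) := by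
        have h1 : ContinuousAt (fun t => -lam * Z t + Z t ^ p) 0 :=
          (hZc.const_mul _).add (hZc.rpow_const (Or.inl (hpos 0 le_rfl).ne'))
        exact h1.continuousWithinAt.tendsto
      exact le_of_tendsto_of_tendsto hrhs hZ'cont
        (Filter.eventually_of_mem self_mem_nhdsWithin (fun t ht => hineq t ht))
  -- key derivative bound when Z t ≥ Z 0
  have hkey : ∀ t : ℝ, 0 ≤ t → Z 0 ≤ Z t → lam * Z t ≤ Z' t := by
    intro t ht hZt
    have h1 : (2 * lam) * Z t ≤ Z t ^ p := by
      have h2 : 2 * lam < Z t ^ (p - 1) :=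
        lt_of_lt_of_le hcon (rpow_le_rpow (hpos 0 le_rfl).le hZt hp1.le)
      have h3 : Z t ^ p = Z t ^ (p - 1) * Z t := by
        rw [← rpow_add_one (hpos t ht).ne']; ring_nf
      rw [h3]
      exact mul_le_mul_of_nonneg_right h2.le (hpos t ht).le
    have := hineq0 t ht
    nlinarith [hpos t ht]
  -- Step 1: Z 0 ≤ Z t for all t ≥ 0
  have hmono : ∀ t : ℝ, 0 ≤ t → Z 0 ≤ Z t := by
    intro t1 ht1
    by_contra hb
    push_neg at hb
    set A : Set ℝ := {t | t ∈ Icc 0 t1 ∧ Z 0 ≤ Z t} with hA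
    have hAclosed : IsClosed A := by
      have : A = Icc 0 t1 ∩ Z ⁻¹' (Ici (Z 0)) := rfl
      rw [this]
      exact ContinuousOn.preimage_isClosed_of_isClosed
        (fun x hx => ((hderiv x hx.1).continuousAt).continuousWithinAt)
        isClosed_Icc isClosed_Ici
    have hAcomp : IsCompact A :=
      isCompact_Icc.of_isClosed_subset hAclosed (fun x hx => hx.1)
    have hAne : A.Nonempty := ⟨0, ⟨le_rfl, ht1⟩, le_rfl⟩
    obtain ⟨hm1, hm2⟩ := hAcomp.sSup_mem hAne
    set m := sSup A with hmdef
    have hm0 : 0 ≤ m := hm1.1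
    have hmne : m ≠ t1 := fun h => absurd (h ▸ hm2) (not_le.2 hb)
    have hmlt : m < t1 := lt_of_le_of_ne hm1.2 hmne
    have hgt : ∀ s, m < s → s ≤ t1 → Z s < Z 0 := by
      intro s hs1 hs2
      by_contra hb2
      push_neg at hb2
      have : s ∈ A := ⟨⟨hm0.trans hs1.le, hs2⟩, hb2⟩
      exact absurd (le_csSup hAcomp.bddAbove this) (not_le.2 hs1)
    have hZ'pos : 0 < Z' m :=
      lt_of_lt_of_le (mul_pos hlam (hpos m hm0)) (hkey m hm0 hm2)
    have hslope := hasDerivAt_iff_tendsto_slope.1 (hderiv m hm0)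
    have hslope' : Filter.Tendsto (slope Z m) (nhdsWithin m (Ioi m)) (nhds (Z' m)) :=
      hslope.mono_left (nhdsWithin_mono m (fun x hx => ne_of_gt hx))
    have hev : ∀ᶠ s in nhdsWithin m (Ioi m), 0 < slope Z m s :=
      hslope'.eventually (eventually_gt_nhds hZ'pos)
    have hev2 : ∀ᶠ s in nhdsWithin m (Ioi m), s ≤ t1 :=
      Filter.eventually_of_mem (Ioc_mem_nhdsGT_of_mem ⟨le_rfl, hmlt⟩) (fun s hs => hs.2)
    have hev3 : ∀ᶠ s in nhdsWithin m (Ioi m), s ∈ Ioi m := eventually_mem_nhdsWithin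
    obtain ⟨s, ⟨hs1, hs2⟩, hs3⟩ := ((hev.and hev2).and hev3).exists
    have hsm : m < s := hs3
    have hZs : Z m < Z s := by
      rw [slope_def_field] at hs1
      have hd : 0 < s - m := by linarith
      have hnum : 0 < Z s - Z m := by
        have h := mul_pos hs1 hd
        rwa [div_mul_cancel₀ _ hd.ne'] at h
      linarith
    exact absurd (hgt s hsm hs2) (not_lt.2 (hm2.trans hZs.le))
  -- Step 2: blow-up of W = Z^(1-p)
  set g : ℝ → ℝ := fun t => Z t ^ (1 - p) + ((p - 1) / 2) * t with hg
  have hgderiv : ∀ t : ℝ, 0 ≤ t →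
      HasDerivAt g (Z' t * (1 - p) * Z t ^ (1 - p - 1) + (p - 1) / 2) t := by
    intro t ht
    have h1 : HasDerivAt (fun t => Z t ^ (1 - p)) (Z' t * (1 - p) * Z t ^ (1 - p - 1)) t :=
      (hderiv t ht).rpow_const (Or.inl (hpos t ht).ne')
    have h2 : HasDerivAt (fun t : ℝ => ((p - 1) / 2) * t) ((p - 1) / 2) t := by
      simpa using (hasDerivAt_id t).const_mul ((p - 1) / 2)
    exact h1.add h2
  have hZ0p : 0 < Z 0 ^ (1 - p) := rpow_pos_of_pos (hpos 0 le_rfl) _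
  have hgle : ∀ t : ℝ, 0 < t → Z' t * (1 - p) * Z t ^ (1 - p - 1) + (p - 1) / 2 ≤ 0 := by
    intro t ht
    have hZt := hpos t ht.le
    have hZtp : 0 < Z t ^ (-p) := rpow_pos_of_pos hZt _
    have e1 : Z t ^ (-p) * Z t ^ p = 1 := by
      rw [← rpow_add hZt]; simp
    have e2 : Z t ^ (-p) * Z t = Z t ^ (1 - p) := by
      nth_rewrite 2 [← rpow_one (Z t)]
      rw [← rpow_add hZt]; ring_nf
    have h3 : 1 - lam * Z t ^ (1 - p) ≤ Z t ^ (-p) * Z' t := by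
      have := hineq t ht
      have h4 : Z t ^ (-p) * (-lam * Z t + Z t ^ p) ≤ Z t ^ (-p) * Z' t :=
        mul_le_mul_of_nonneg_left this hZtp.le
      calc 1 - lam * Z t ^ (1 - p) = Z t ^ (-p) * (-lam * Z t + Z t ^ p) := by
            rw [mul_add, ← mul_assoc, mul_comm (Z t ^ (-p)) (-lam), mul_assoc, e2, e1]; ring
        _ ≤ Z t ^ (-p) * Z' t := h4
    have h5 : Z t ^ (1 - p) ≤ Z 0 ^ (1 - p) :=
      antitoneOn_rpow_Ioi_of_exponent_nonpos (by linarith)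
        (mem_Ioi.2 (hpos 0 le_rfl)) (mem_Ioi.2 hZt) (hmono t ht.le)
    have h6 : lam * Z 0 ^ (1 - p) < 1 / 2 := by
      have e3 : Z 0 ^ (1 - p) = (Z 0 ^ (p - 1))⁻¹ := by
        rw [← rpow_neg (hpos 0 le_rfl).le]; ring_nf
      rw [e3]
      have ha : 0 < Z 0 ^ (p - 1) := rpow_pos_of_pos (hpos 0 le_rfl) _
      have hb := mul_inv_cancel₀ ha.ne'
      have hc : 0 < (Z 0 ^ (p - 1))⁻¹ := inv_pos.2 ha
      nlinarith
    have h7 : (1:ℝ) / 2 ≤ Z t ^ (-p) * Z' t := by nlinarith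
    have e4 : (1:ℝ) - p - 1 = -p := by ring
    rw [e4]
    nlinarith
  have hganti : AntitoneOn g (Ici 0) := by
    apply antitoneOn_of_deriv_nonpos (convex_Ici 0)
    · intro t ht
      exact ((hgderiv t ht).continuousAt).continuousWithinAt
    · intro t ht
      rw [interior_Ici] at ht
      exact (hgderiv t (le_of_lt ht)).differentiableAt.differentiableWithinAt
    · intro t ht
      rw [interior_Ici] at ht
      rw [(hgderiv t ht.le).deriv]
      exact hgle t ht
  set T : ℝ := 2 * Z 0 ^ (1 - p) / (p - 1) with hT
  have hTpos : 0 < T := by positivity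
  have := hganti (mem_Ici.2 le_rfl) (mem_Ici.2 hTpos.le) hTpos.le
  have hgT : g T = Z T ^ (1 - p) + Z 0 ^ (1 - p) := by
    rw [hg]
    have : (p - 1) / 2 * T = Z 0 ^ (1 - p) := by
      rw [hT]; field_simp
    simp only [this]
  have hg0 : g 0 = Z 0 ^ (1 - p) := by simp [hg]
  rw [hgT, hg0] at this
  have hZT : 0 < Z T ^ (1 - p) := rpow_pos_of_pos (hpos T hTpos.le) _
  linarith
end
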